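/- arXiv:2602.13956 — 9 statements merged into one kernel-verified Lean document; each statement's English description precedes it below -/
import Mathlib

section
/- Let G be a connected graph with at least one leaf, let s be a support vertex of G adjacent to a leaf ℓ, and let H be obtained from G by attaching a new leaf ℓ' to s. Then G is well-totally dominated if and only if H is well-totally dominated. -/
open SimpleGraph Set

/-- Open neighborhood of a set of vertices. -/
def nbhd {V : Type*} (G : SimpleGraph V) (D : Set V) : Set V :=
  {u | ∃ v ∈ D, G.Adj v u}

/-- Total dominating set. -/
def IsTDS {V : Type*} (G : SimpleGraph V) (D : Set V) : Prop :=
  nbhd G D = Set.univ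

/-- Minimal total dominating set. -/
def IsMinTDS {V : Type*} (G : SimpleGraph V) (D : Set V) : Prop :=
  IsTDS G D ∧ ∀ D' : Set V, D' ⊂ D → ¬ IsTDS G D'

/-- Well-totally dominated graph: all minimal TDSs have the same size. -/
def WTD {V : Type*} (G : SimpleGraph V) : Prop :=
  ∀ D₁ D₂ : Set V, IsMinTDS G D₁ → IsMinTDS G D₂ → D₁.ncard = D₂.ncard

/-- A leaf is a vertex of degree 1. -/
def IsLeaf {V : Type*} (G : SimpleGraph V) (v : V) : Prop :=
  (G.neighborSet v).ncard = 1

/-- Height of a vertex: minimum distance to a leaf. -/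
noncomputable def heightV {V : Type*} (G : SimpleGraph V) (v : V) : ℕ :=
  sInf {d | ∃ ℓ, IsLeaf G ℓ ∧ G.dist v ℓ = d}

/-- Height of a graph: maximum vertex height. -/
noncomputable def heightG {V : Type*} (G : SimpleGraph V) : ℕ :=
  sSup {d | ∃ v, heightV G v = d}

/-- Balanced: no two vertices of the same height are adjacent. -/
def IsBalanced {V : Type*} (G : SimpleGraph V) : Prop :=
  ∀ u v : V, G.Adj u v → heightV G u ≠ heightV G v

/-- Minimal with respect to open neighborhoods. -/
def IsMinNbhd {V : Type*} (G : SimpleGraph V) (D : Set V) : Prop :=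
  ∀ D' : Set V, D' ⊂ D → nbhd G D' ≠ nbhd G D

/-- The graph obtained from `G` by attaching one new leaf to the vertex `s`. -/
def attachLeaf {V : Type*} (G : SimpleGraph V) (s : V) : SimpleGraph (V ⊕ Unit) where
  Adj x y :=
    match x, y with
    | Sum.inl u, Sum.inl v => G.Adj u v
    | Sum.inl u, Sum.inr _ => u = s
    | Sum.inr _, Sum.inl v => v = s
    | Sum.inr _, Sum.inr _ => False
  symm := ⟨by
    rintro (u | u) (v | v) h
    · exact G.adj_symm h
    · exact h
    · exact h
    · exact h.elim⟩
  loopless := ⟨by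
    rintro (u | u) h
    · exact G.irrefl h
    · exact h⟩

section
open Sum
section Aux
variable {V : Type*}

lemma mem_nbhd' {G : SimpleGraph V} {D : Set V} {u : V} :
    u ∈ nbhd G D ↔ ∃ v ∈ D, G.Adj v u := Iff.rfl

lemma isTDS_iff' {G : SimpleGraph V} {D : Set V} :
    IsTDS G D ↔ ∀ u, ∃ v ∈ D, G.Adj v u := by
  constructor
  · intro h u
    have : u ∈ nbhd G D := h ▸ mem_univ u
    exact this
  · intro h
    ext u
    simp only [mem_univ, iff_true]
    exact h u

lemma leaf_adj_eq' {G : SimpleGraph V} {s ℓ : V} (hℓ : IsLeaf G ℓ) (hadj : G.Adj s ℓ)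
    {v : V} (hv : G.Adj v ℓ) : v = s := by
  obtain ⟨a, ha⟩ := Set.ncard_eq_one.mp hℓ
  have hs : s ∈ G.neighborSet ℓ := hadj.symm
  have hv' : v ∈ G.neighborSet ℓ := hv.symm
  rw [ha, mem_singleton_iff] at hs hv'
  rw [hv', hs]

lemma nbhd_swap' {G : SimpleGraph V} {a b : V} (hab : ∀ y, G.Adj a y ↔ G.Adj b y)
    {D : Set V} (ha : a ∈ D) :
    nbhd G (insert b (D \ {a})) = nbhd G D := by
  ext u
  simp only [mem_nbhd']
  constructor
  · rintro ⟨v, hv, hadjv⟩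
    rcases hv with rfl | ⟨hvD, -⟩
    · exact ⟨a, ha, (hab u).mpr hadjv⟩
    · exact ⟨v, hvD, hadjv⟩
  · rintro ⟨v, hv, hadjv⟩
    by_cases h : v = a
    · exact ⟨b, mem_insert _ _, (hab u).mp (h ▸ hadjv)⟩
    · exact ⟨v, Or.inr ⟨hv, h⟩, hadjv⟩

lemma minTDS_swap' [Finite V] {G : SimpleGraph V} {a b : V}
    (hab : ∀ y, G.Adj a y ↔ G.Adj b y) {D : Set V} (ha : a ∈ D) (hb : b ∉ D)
    (hmin : IsMinTDS G D) :
    IsMinTDS G (insert b (D \ {a})) ∧ (insert b (D \ {a})).ncard = D.ncard := by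
  have hane : a ≠ b := fun h => hb (h ▸ ha)
  have haD'' : a ∉ insert b (D \ {a}) := by simp [hane]
  refine ⟨⟨?_, ?_⟩, ?_⟩
  · unfold IsTDS
    rw [nbhd_swap' hab ha]
    exact hmin.1
  · intro E hE hTDS
    by_cases hbE : b ∈ E
    · have haE : a ∉ E := fun h => haD'' (hE.1 h)
      have hTDS' : IsTDS G (insert a (E \ {b})) := by
        unfold IsTDS
        rw [nbhd_swap' (fun y => (hab y).symm) hbE]
        exact hTDS
      have hsub : insert a (E \ {b}) ⊆ D := by
        intro x hx
        rcases hx with rfl | ⟨hxE, hxb⟩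
        · exact ha
        · rcases hE.1 hxE with rfl | ⟨hxD, -⟩
          · exact absurd rfl hxb
          · exact hxD
      have hne : insert a (E \ {b}) ≠ D := by
        intro h
        apply hE.2
        intro x hx
        rcases hx with rfl | ⟨hxD, hxa⟩
        · exact hbE
        · have : x ∈ insert a (E \ {b}) := h.symm ▸ hxD
          rcases this with rfl | ⟨hxE, -⟩
          · exact absurd rfl hxa
          · exact hxE
      exact hmin.2 _ (HasSubset.Subset.ssubset_of_ne hsub hne) hTDS'
    · have hsub : E ⊆ D := by
        intro x hx
        rcases hE.1 hx with rfl | ⟨hxD, -⟩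
        · exact absurd hx hbE
        · exact hxD
      have hne : E ≠ D := by
        intro h
        exact haD'' (hE.1 (h.symm ▸ ha))
      exact hmin.2 E (HasSubset.Subset.ssubset_of_ne hsub hne) hTDS
  · rw [Set.ncard_insert_of_notMem (fun h => hb h.1), Set.ncard_diff_singleton_add_one ha]

end Aux

section Attach
variable {V : Type*} {G : SimpleGraph V} {s ℓ : V}

lemma tds_image_iff' (A : Set V) :
    IsTDS (attachLeaf G s) (inl '' A) ↔ IsTDS G A ∧ s ∈ A := by
  rw [isTDS_iff', isTDS_iff']
  constructor
  · intro h
    constructor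
    · intro x
      obtain ⟨w, hw, hadjw⟩ := h (inl x)
      obtain ⟨v, hv, rfl⟩ := hw
      exact ⟨v, hv, hadjw⟩
    · obtain ⟨w, hw, hadjw⟩ := h (inr ())
      obtain ⟨v, hv, rfl⟩ := hw
      have : v = s := hadjw
      exact this ▸ hv
  · rintro ⟨hA, hs⟩ u
    rcases u with x | t
    · obtain ⟨v, hv, hadjv⟩ := hA x
      exact ⟨inl v, mem_image_of_mem _ hv, hadjv⟩
    · exact ⟨inl s, mem_image_of_mem _ hs, rfl⟩

lemma s_mem_of_tds' (hℓ : IsLeaf G ℓ) (hadj : G.Adj s ℓ) {A : Set V} (hA : IsTDS G A) :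
    s ∈ A := by
  obtain ⟨v, hv, hadjv⟩ := isTDS_iff'.mp hA ℓ
  exact leaf_adj_eq' hℓ hadj hadjv ▸ hv

lemma eq_image_preimage' {D : Set (V ⊕ Unit)} (hr : inr () ∉ D) :
    D = inl '' (inl ⁻¹' D) := by
  rw [Set.image_preimage_eq_inter_range]
  refine (Set.inter_eq_left.mpr ?_).symm
  rintro (x | ⟨⟩) hx
  · exact ⟨x, rfl⟩
  · exact absurd hx hr

lemma min_image' (hℓ : IsLeaf G ℓ) (hadj : G.Adj s ℓ) {A : Set V}
    (hA : IsMinTDS G A) : IsMinTDS (attachLeaf G s) (inl '' A) := by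
  constructor
  · exact (tds_image_iff' A).mpr ⟨hA.1, s_mem_of_tds' hℓ hadj hA.1⟩
  · intro E hE hTDS
    have hrE : inr () ∉ E := by
      intro h
      obtain ⟨v, -, hv⟩ := hE.1 h
      exact absurd hv (by simp)
    have hEeq : E = inl '' (inl ⁻¹' E) := eq_image_preimage' hrE
    have hA' : IsTDS G (inl ⁻¹' E) ∧ s ∈ inl ⁻¹' E :=
      (tds_image_iff' _).mp (hEeq ▸ hTDS)
    have hsub : inl ⁻¹' E ⊆ A := by
      intro x hx
      obtain ⟨v, hv, hveq⟩ := hE.1 hx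
      exact (inl_injective hveq) ▸ hv
    have hne : inl ⁻¹' E ≠ A := by
      intro h
      exact hE.2 (by rw [hEeq, h])
    exact hA.2 _ (HasSubset.Subset.ssubset_of_ne hsub hne) hA'.1

lemma min_preimage' (hℓ : IsLeaf G ℓ) (hadj : G.Adj s ℓ) {D : Set (V ⊕ Unit)}
    (hD : IsMinTDS (attachLeaf G s) D) (hr : inr () ∉ D) :
    IsMinTDS G (inl ⁻¹' D) := by
  have hDeq : D = inl '' (inl ⁻¹' D) := eq_image_preimage' hr
  constructor
  · exact ((tds_image_iff' _).mp (hDeq ▸ hD.1)).1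
  · intro A' hA' hTDS'
    have hs' : s ∈ A' := s_mem_of_tds' hℓ hadj hTDS'
    have hsub : inl '' A' ⊆ D := by
      rw [hDeq]
      exact Set.image_mono hA'.1
    have hne : inl '' A' ≠ D := by
      intro h
      rw [hDeq] at h
      exact hA'.2 ((Set.image_injective.mpr inl_injective h) ▸ le_refl _)
    exact hD.2 _ (HasSubset.Subset.ssubset_of_ne hsub hne)
      ((tds_image_iff' A').mpr ⟨hTDS', hs'⟩)

lemma twin' (hℓ : IsLeaf G ℓ) (hadj : G.Adj s ℓ) :
    ∀ y, (attachLeaf G s).Adj (inr ()) y ↔ (attachLeaf G s).Adj (inl ℓ) y := by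
  rintro (v | ⟨⟩)
  · show v = s ↔ G.Adj ℓ v
    constructor
    · rintro rfl; exact hadj.symm
    · intro h; exact leaf_adj_eq' hℓ hadj h.symm
  · show False ↔ ℓ = s
    simp only [false_iff]
    exact fun h => (G.ne_of_adj hadj) h.symm

lemma not_leaf_mem' (hℓ : IsLeaf G ℓ) (hadj : G.Adj s ℓ) {D : Set (V ⊕ Unit)}
    (hD : IsMinTDS (attachLeaf G s) D) (hr : inr () ∈ D) : inl ℓ ∉ D := by
  intro h
  have hss : D \ {inr ()} ⊂ D := Set.sdiff_singleton_ssubset.mpr hr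
  apply hD.2 _ hss
  rw [isTDS_iff']
  intro u
  obtain ⟨w, hw, hadjw⟩ := isTDS_iff'.mp hD.1 u
  by_cases hwe : w = inr ()
  · subst hwe
    exact ⟨inl ℓ, ⟨h, by simp⟩, (twin' hℓ hadj u).mp hadjw⟩
  · exact ⟨w, ⟨hw, hwe⟩, hadjw⟩

end Attach


section Main
variable {V : Type*} [Fintype V] {G : SimpleGraph V} {s ℓ : V}

lemma reduce' (hℓ : IsLeaf G ℓ) (hadj : G.Adj s ℓ) {D : Set (V ⊕ Unit)}
    (hD : IsMinTDS (attachLeaf G s) D) :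
    ∃ A : Set V, IsMinTDS G A ∧ A.ncard = D.ncard := by
  by_cases hr : Sum.inr () ∈ D
  · have hb : Sum.inl ℓ ∉ D := not_leaf_mem' hℓ hadj hD hr
    obtain ⟨hmin', hcard⟩ := minTDS_swap' (twin' hℓ hadj) hr hb hD
    have hr'' : Sum.inr () ∉ insert (Sum.inl ℓ) (D \ {Sum.inr ()}) := by simp
    refine ⟨Sum.inl ⁻¹' (insert (Sum.inl ℓ) (D \ {Sum.inr ()})),
      min_preimage' hℓ hadj hmin' hr'', ?_⟩
    rw [← hcard]
    conv_rhs => rw [eq_image_preimage' hr'']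
    rw [Set.ncard_image_of_injective _ Sum.inl_injective]
  · refine ⟨Sum.inl ⁻¹' D, min_preimage' hℓ hadj hD hr, ?_⟩
    conv_rhs => rw [eq_image_preimage' hr]
    rw [Set.ncard_image_of_injective _ Sum.inl_injective]

end Main

end

theorem stmt1 {V : Type*} [Fintype V] (G : SimpleGraph V) (hconn : G.Connected)
    (s ℓ : V) (hℓ : IsLeaf G ℓ) (hadj : G.Adj s ℓ) :
    WTD G ↔ WTD (attachLeaf G s) := by
  constructor
  · intro hG D₁ D₂ h₁ h₂
    obtain ⟨A₁, hA₁, hc₁⟩ := reduce' hℓ hadj h₁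
    obtain ⟨A₂, hA₂, hc₂⟩ := reduce' hℓ hadj h₂
    rw [← hc₁, ← hc₂]
    exact hG A₁ A₂ hA₁ hA₂
  · intro hH A₁ A₂ h₁ h₂
    have := hH (Sum.inl '' A₁) (Sum.inl '' A₂) (min_image' hℓ hadj h₁) (min_image' hℓ hadj h₂)
    rwa [Set.ncard_image_of_injective _ Sum.inl_injective,
      Set.ncard_image_of_injective _ Sum.inl_injective] at this
end

section
/- Let G be a finite simple graph and let D ⊆ V(G) satisfy N(D) = V(G). Then D is a minimal total dominating set if and only if there exists an injective function 𝒟 : D → N(D) such that for all v ∈ D, N(𝒟(v)) ∩ D = {v}. -/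
open SimpleGraph Set

theorem stmt3 {V : Type*} [Fintype V] (G : SimpleGraph V) (D : Set V)
    (hdom : nbhd G D = Set.univ) :
    IsMinTDS G D ↔
      ∃ f : V → V, Set.InjOn f D ∧
        ∀ v ∈ D, f v ∈ nbhd G D ∧ G.neighborSet (f v) ∩ D = {v} := by
  constructor
  · rintro ⟨htds, hmin⟩
    have key : ∀ v, v ∈ D → ∃ u, G.neighborSet u ∩ D = {v} := by
      intro v hv
      have hsub : D \ {v} ⊂ D := ⟨Set.diff_subset, fun h => (h hv).2 rfl⟩
      have hnt := hmin _ hsub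
      have : ∃ u, u ∉ nbhd G (D \ {v}) := by
        by_contra h
        push_neg at h
        exact hnt (Set.eq_univ_of_forall h)
      obtain ⟨u, hu⟩ := this
      refine ⟨u, ?_⟩
      have hu2 : u ∈ nbhd G D := by rw [hdom]; trivial
      obtain ⟨w, hwD, hwu⟩ := hu2
      have hwv : w = v := by
        by_contra hne
        exact hu ⟨w, ⟨hwD, hne⟩, hwu⟩
      ext x
      constructor
      · rintro ⟨hadj, hxD⟩
        have : x = v := by
          by_contra hne
          exact hu ⟨x, ⟨hxD, hne⟩, hadj.symm⟩
        exact this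
      · intro hx
        rw [show x = v from hx]
        exact ⟨(hwv ▸ hwu : G.Adj v u).symm, hv⟩
    choose g hg using key
    classical
    refine ⟨fun v => if h : v ∈ D then g v h else v, ?_, ?_⟩
    · intro a ha b hb hab
      simp only [dif_pos ha, dif_pos hb] at hab
      have := hg a ha
      rw [hab, hg b hb] at this
      exact (Set.singleton_eq_singleton_iff.mp this).symm
    · intro v hv
      simp only [dif_pos hv]
      exact ⟨by rw [hdom]; trivial, hg v hv⟩
  · rintro ⟨f, hinj, hf⟩
    refine ⟨hdom, ?_⟩
    intro D' hsub htds'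
    obtain ⟨v, hvD, hvD'⟩ := Set.exists_of_ssubset hsub
    have : f v ∈ nbhd G D' := by rw [htds']; trivial
    obtain ⟨w, hwD', hwadj⟩ := this
    have hw : w ∈ G.neighborSet (f v) ∩ D := ⟨hwadj.symm, hsub.1 hwD'⟩
    rw [(hf v hvD).2] at hw
    exact hvD' (hw ▸ hwD')
end

section
/- Let T be a balanced tree and let u, v be vertices of T with height(u) = height(v). Then dist(u, v) is even. -/
open SimpleGraph Set

lemma height_adj_le {V : Type*} (T : SimpleGraph V) (hconn : T.Connected)
    (ℓ0 : V) (hℓ0 : IsLeaf T ℓ0) {a b : V} (hab : T.Adj a b) :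
    heightV T a ≤ heightV T b + 1 := by
  have hne : {d | ∃ ℓ, IsLeaf T ℓ ∧ T.dist b ℓ = d}.Nonempty :=
    ⟨T.dist b ℓ0, ℓ0, hℓ0, rfl⟩
  obtain ⟨ℓ, hℓ, hd⟩ := Nat.sInf_mem hne
  have h1 : T.dist a ℓ ≤ T.dist a b + T.dist b ℓ := hconn.dist_triangle
  have h2 : T.dist a b = 1 := (SimpleGraph.dist_eq_one_iff_adj).mpr hab
  have h3 : heightV T a ≤ T.dist a ℓ := Nat.sInf_le ⟨ℓ, hℓ, rfl⟩
  have h4 : heightV T b = T.dist b ℓ := hd.symm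
  omega

lemma height_walk_parity {V : Type*} (T : SimpleGraph V) (hconn : T.Connected)
    (hbal : IsBalanced T) (ℓ0 : V) (hℓ0 : IsLeaf T ℓ0) {a b : V}
    (p : T.Walk a b) : (heightV T a + p.length) % 2 = heightV T b % 2 := by
  induction p with
  | nil => simp
  | cons hadj q ih =>
    rename_i x y z
    have h1 := height_adj_le T hconn ℓ0 hℓ0 hadj
    have h2 := height_adj_le T hconn ℓ0 hℓ0 hadj.symm
    have h3 := hbal _ _ hadj
    simp only [SimpleGraph.Walk.length_cons] at *
    omega

theorem stmt6 {V : Type*} [Fintype V] (T : SimpleGraph V) (htree : T.IsTree)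
    (hbal : IsBalanced T) (u v : V) (h : heightV T u = heightV T v) :
    Even (T.dist u v) := by
  have hconn := htree.isConnected
  by_cases hleaf : ∃ ℓ, IsLeaf T ℓ
  · obtain ⟨ℓ0, hℓ0⟩ := hleaf
    obtain ⟨p, hp⟩ := hconn.exists_walk_length_eq_dist u v
    have := height_walk_parity T hconn hbal ℓ0 hℓ0 p
    rw [hp] at this
    rw [Nat.even_iff]
    omega
  · -- no leaves: all heights 0, so no edges by balance, so u = v
    have hzero : ∀ w : V, heightV T w = 0 := by
      intro w
      have : {d | ∃ ℓ, IsLeaf T ℓ ∧ T.dist w ℓ = d} = ∅ := by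
        ext d; simp only [Set.mem_setOf_eq, Set.mem_empty_iff_false, iff_false]
        rintro ⟨ℓ, hℓ, -⟩; exact hleaf ⟨ℓ, hℓ⟩
      rw [heightV, this, Nat.sInf_empty]
    have hnoedge : ∀ a b : V, ¬ T.Adj a b := by
      intro a b hab
      exact hbal a b hab (by rw [hzero, hzero])
    have huv : u = v := by
      by_contra hne
      obtain ⟨p⟩ := hconn.preconnected u v
      cases p with
      | nil => exact hne rfl
      | cons hadj q => exact hnoedge _ _ hadj
    rw [huv, SimpleGraph.dist_self]
    exact Even.zero
end

section
/- Let T be a tree with a proper 2-coloring of its vertices. Then T is balanced (no two vertices of the same height are adjacent) if and only if all leaves of T receive the same color. -/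
open SimpleGraph Set

-- parity along walks
lemma walk_parity {V : Type*} {T : SimpleGraph V} {χ : V → Bool}
    (hproper : ∀ u v : V, T.Adj u v → χ u ≠ χ v) :
    ∀ {u v : V} (p : T.Walk u v), (χ u = χ v ↔ Even p.length) := by
  intro u v p
  induction p with
  | nil => simp
  | @cons a b c h p ih =>
    have hab := hproper _ _ h
    simp only [SimpleGraph.Walk.length_cons, Nat.even_add_one, ← ih]
    revert hab
    cases χ a <;> cases χ b <;> cases χ c <;> simp

lemma even_dist_iff {V : Type*} {T : SimpleGraph V} {χ : V → Bool}
    (hproper : ∀ u v : V, T.Adj u v → χ u ≠ χ v) (hconn : T.Connected)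
    (u v : V) : Even (T.dist u v) ↔ χ u = χ v := by
  obtain ⟨p, hp⟩ := hconn.exists_walk_length_eq_dist u v
  rw [← hp, ← walk_parity hproper p]

-- a finite tree with an edge has a leaf
lemma tree_leaf {V : Type*} [Fintype V] {T : SimpleGraph V} (htree : T.IsTree)
    {u v : V} (huv : T.Adj u v) : ∃ ℓ, IsLeaf T ℓ := by
  classical
  by_contra h
  push_neg at h
  have hdeg : ∀ w, 2 ≤ T.degree w := by
    intro w
    have h1 : 0 < T.degree w := by
      rw [SimpleGraph.degree_pos_iff_exists_adj]
      by_cases hw : w = u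
      · exact ⟨v, hw ▸ huv⟩
      · obtain ⟨p⟩ := htree.isConnected.preconnected w u
        cases p with
        | nil => exact absurd rfl hw
        | cons h p => exact ⟨_, h⟩
    have h2 : T.degree w ≠ 1 := by
      intro h1
      apply h w
      rw [IsLeaf, Set.ncard_eq_toFinset_card', ← SimpleGraph.neighborFinset_def]
      exact h1
    omega
  have hsum := SimpleGraph.sum_degrees_eq_twice_card_edges T
  have hcard := htree.card_edgeFinset
  have hge : 2 * Fintype.card V ≤ ∑ w, T.degree w := by
    calc 2 * Fintype.card V = ∑ _w : V, 2 := by simp [mul_comm]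
    _ ≤ ∑ w, T.degree w := Finset.sum_le_sum fun w _ => hdeg w
  have hpos : 0 < Fintype.card V := Fintype.card_pos_iff.2 ⟨u⟩
  omega

theorem stmt7 {V : Type*} [Fintype V] (T : SimpleGraph V) (htree : T.IsTree)
    (χ : V → Bool) (hproper : ∀ u v : V, T.Adj u v → χ u ≠ χ v) :
    IsBalanced T ↔
      ∀ ℓ₁ ℓ₂ : V, IsLeaf T ℓ₁ → IsLeaf T ℓ₂ → χ ℓ₁ = χ ℓ₂ := by
  rw [IsBalanced]
  have hconn := htree.isConnected
  -- achieved minimum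
  have hach : ∀ (v ℓ₀ : V), IsLeaf T ℓ₀ →
      ∃ ℓ, IsLeaf T ℓ ∧ T.dist v ℓ = heightV T v := by
    intro v ℓ₀ h₀
    have hm : T.dist v ℓ₀ ∈ {d | ∃ ℓ, IsLeaf T ℓ ∧ T.dist v ℓ = d} := ⟨ℓ₀, h₀, rfl⟩
    exact Nat.sInf_mem ⟨_, hm⟩
  have hle : ∀ (v ℓ : V), IsLeaf T ℓ → heightV T v ≤ T.dist v ℓ := by
    intro v ℓ hℓ
    exact Nat.sInf_le ⟨ℓ, hℓ, rfl⟩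
  have hleaf0 : ∀ ℓ : V, IsLeaf T ℓ → heightV T ℓ = 0 := by
    intro ℓ hℓ
    have := hle ℓ ℓ hℓ
    simpa [SimpleGraph.dist_self] using this
  constructor
  · intro hbal ℓ₁ ℓ₂ h1 h2
    have lip : ∀ a b : V, T.Adj a b → heightV T a ≤ heightV T b + 1 := by
      intro a b hab
      obtain ⟨ℓ, hℓ, hd⟩ := hach b ℓ₁ h1
      have h3 := hle a ℓ hℓ
      have h4 := hconn.dist_triangle (u := a) (v := b) (w := ℓ)
      have h5 : T.dist a b = 1 := SimpleGraph.dist_eq_one_iff_adj.2 hab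
      omega
    have step : ∀ a b : V, T.Adj a b → heightV T a % 2 ≠ heightV T b % 2 := by
      intro a b hab
      have := lip a b hab
      have := lip b a hab.symm
      have := hbal a b hab
      omega
    have walkstep : ∀ {a b : V} (p : T.Walk a b),
        (heightV T a + p.length) % 2 = heightV T b % 2 := by
      intro a b p
      induction p with
      | nil => simp
      | @cons a b c h p ih =>
        have := step a b h
        simp only [SimpleGraph.Walk.length_cons]
        omega
    obtain ⟨p⟩ := hconn.preconnected ℓ₁ ℓ₂
    have hmod := walkstep p
    rw [hleaf0 ℓ₁ h1, hleaf0 ℓ₂ h2] at hmod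
    have heven : Even p.length := by rw [Nat.even_iff]; omega
    exact (walk_parity hproper p).2 heven
  · intro hsame u v huv
    obtain ⟨ℓ₀, hℓ₀⟩ := tree_leaf htree huv
    obtain ⟨ℓu, hℓu, hdu⟩ := hach u ℓ₀ hℓ₀
    obtain ⟨ℓv, hℓv, hdv⟩ := hach v ℓ₀ hℓ₀
    have e1 : Even (heightV T u) ↔ (χ u = χ ℓu) := by
      rw [← hdu, even_dist_iff hproper hconn]
    have e2 : Even (heightV T v) ↔ (χ v = χ ℓv) := by
      rw [← hdv, even_dist_iff hproper hconn]
    have hll : χ ℓu = χ ℓv := hsame ℓu ℓv hℓu hℓv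
    have huv' := hproper u v huv
    intro heq
    rw [heq] at e1
    rw [e1, hll] at e2
    revert e2 huv'
    cases χ u <;> cases χ v <;> cases χ ℓv <;> simp
end

section
/- Let T be a balanced tree of height d > 0, and for k ∈ ℕ let V_k denote the set of vertices of T of height exactly k. Then |V_{d−1}| > |V_d|. -/
open SimpleGraph Set

section AuxStmt9

variable {V : Type*}

private lemma firstStep_eq {T : SimpleGraph V} (hT : T.IsAcyclic) {w r v : V}
    (h : T.Adj w v) (q : T.Walk v r) (hq : q.IsPath) (hw : w ∉ q.support)
    (P : T.Walk w r) (hP : P.IsPath) : P.getVert 1 = v := by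
  have hcons : (q.cons h).IsPath := (Walk.cons_isPath_iff h q).mpr ⟨hq, hw⟩
  have hPeq : P = q.cons h :=
    congrArg Subtype.val (hT.path_unique ⟨P, hP⟩ ⟨q.cons h, hcons⟩)
  rw [hPeq, Walk.getVert_cons _ _ one_ne_zero, Nat.sub_self, Walk.getVert_zero]

private lemma claimA {T : SimpleGraph V} (hT : T.IsAcyclic) {v r x w : V}
    (h1 : T.Adj v x) (q : T.Walk x r) (hq : (q.cons h1).IsPath)
    (h2 : T.Adj v w) (hne : w ≠ x)
    (P : T.Walk w r) (hP : P.IsPath) : P.getVert 1 = v := by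
  classical
  have hqpath : q.IsPath := ((Walk.cons_isPath_iff h1 q).mp hq).1
  have hvq : v ∉ q.support := ((Walk.cons_isPath_iff h1 q).mp hq).2
  have hw : w ∉ (q.cons h1).support := by
    rw [Walk.support_cons]
    intro hmem
    rcases List.mem_cons.mp hmem with h | hmem
    · exact h2.ne' h
    · have ht : (q.takeUntil w hmem).IsPath := hqpath.takeUntil hmem
      have hvt : v ∉ (q.takeUntil w hmem).support :=
        fun hc => hvq (Walk.support_takeUntil_subset _ hmem hc)
      have hp2 : ((q.takeUntil w hmem).cons h1).IsPath :=
        (Walk.cons_isPath_iff h1 _).mpr ⟨ht, hvt⟩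
      have heq : (q.takeUntil w hmem).cons h1 = (SimpleGraph.Path.singleton h2 : T.Walk v w) :=
        congrArg Subtype.val (hT.path_unique ⟨(q.takeUntil w hmem).cons h1, hp2⟩
          (SimpleGraph.Path.singleton h2))
      have hlen := congrArg Walk.length heq
      simp only [SimpleGraph.Path.singleton, Walk.length_cons, Walk.length_nil] at hlen
      have hzero : (q.takeUntil w hmem).length = 0 := by omega
      exact hne (Walk.eq_of_length_eq_zero hzero).symm
  exact firstStep_eq hT h2.symm (q.cons h1) hq hw P hP

end AuxStmt9

theorem stmt9 {V : Type*} [Fintype V] (T : SimpleGraph V) (htree : T.IsTree)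
    (hbal : IsBalanced T) (d : ℕ) (hd : heightG T = d) (hpos : 0 < d) :
    ({v | heightV T v = d}).ncard < ({v | heightV T v = d - 1}).ncard := by
  classical
  have hconn : T.Connected := htree.isConnected
  have hT : T.IsAcyclic := htree.IsAcyclic
  have hd' : sSup {k : ℕ | ∃ v, heightV T v = k} = d := hd
  have hSr : {k : ℕ | ∃ v, heightV T v = k} = Set.range (heightV T) := by
    ext k; simp [Set.range, eq_comm]
  have hbdd : BddAbove {k : ℕ | ∃ v, heightV T v = k} := by
    rw [hSr]; exact (Set.finite_range _).bddAbove
  have hSne : {k : ℕ | ∃ v, heightV T v = k}.Nonempty := by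
    by_contra h
    rw [Set.not_nonempty_iff_eq_empty] at h
    rw [h, csSup_empty, Nat.bot_eq_zero] at hd'
    omega
  have hdmem : d ∈ {k : ℕ | ∃ v, heightV T v = k} := hd' ▸ Nat.sSup_mem hSne hbdd
  obtain ⟨r, hr⟩ := hdmem
  -- a leaf exists
  have hLr : {k | ∃ ℓ, IsLeaf T ℓ ∧ T.dist r ℓ = k}.Nonempty := by
    by_contra h
    rw [Set.not_nonempty_iff_eq_empty] at h
    have : heightV T r = 0 := by rw [heightV, h, Nat.sInf_empty]
    omega
  obtain ⟨_, ℓ0, hℓ0, -⟩ := hLr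
  have hLne : ∀ v : V, {k | ∃ ℓ, IsLeaf T ℓ ∧ T.dist v ℓ = k}.Nonempty :=
    fun v => ⟨T.dist v ℓ0, ℓ0, hℓ0, rfl⟩
  have hexleaf : ∀ v : V, ∃ ℓ, IsLeaf T ℓ ∧ T.dist v ℓ = heightV T v :=
    fun v => Nat.sInf_mem (hLne v)
  have hle_dist : ∀ v ℓ : V, IsLeaf T ℓ → heightV T v ≤ T.dist v ℓ :=
    fun v ℓ h => Nat.sInf_le ⟨ℓ, h, rfl⟩
  have hadj_le : ∀ u v : V, T.Adj u v → heightV T u ≤ heightV T v + 1 := by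
    intro u v huv
    obtain ⟨ℓ, hℓ, hdist⟩ := hexleaf v
    have h1 : heightV T u ≤ T.dist u ℓ := hle_dist u ℓ hℓ
    have h2 : T.dist u ℓ ≤ T.dist u v + T.dist v ℓ := hconn.dist_triangle
    have h3 : T.dist u v ≤ 1 := by simpa using SimpleGraph.dist_le huv.toWalk
    omega
  have hle_d : ∀ v : V, heightV T v ≤ d := by
    intro v
    have hm : heightV T v ∈ {k : ℕ | ∃ v, heightV T v = k} := ⟨v, rfl⟩
    have := le_csSup hbdd hm
    omega
  have hnb : ∀ v, heightV T v = d → ∀ u, T.Adj v u → heightV T u = d - 1 := by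
    intro v hv u hadj
    have h1 := hadj_le u v hadj.symm
    have h2 := hadj_le v u hadj
    have h3 := hle_d u
    have h4 := hbal v u hadj
    omega
  have htwo : ∀ v, heightV T v = d → 1 < (T.neighborSet v).ncard := by
    intro v hv
    have hfin : (T.neighborSet v).Finite := Set.toFinite _
    have hnotleaf : (T.neighborSet v).ncard ≠ 1 := by
      intro hL
      have : heightV T v ≤ T.dist v v := hle_dist v v hL
      rw [SimpleGraph.dist_self] at this
      omega
    have hvℓ : v ≠ ℓ0 := by
      intro h
      have : heightV T v ≤ T.dist v v := by
        subst h; exact hle_dist v v hℓ0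
      rw [SimpleGraph.dist_self] at this
      omega
    have hne : (T.neighborSet v).Nonempty := by
      obtain ⟨W⟩ := hconn.preconnected v ℓ0
      cases W with
      | nil => exact absurd rfl hvℓ
      | cons h q => exact ⟨_, h⟩
    have h0 : 0 < (T.neighborSet v).ncard := (Set.ncard_pos hfin).mpr hne
    omega
  have hpick : ∀ v, heightV T v = d → ∀ x : V, ∃ w, T.Adj v w ∧ w ≠ x := by
    intro v hv x
    obtain ⟨b, hb, hbx⟩ := Set.exists_ne_of_one_lt_ncard (htwo v hv) x
    exact ⟨b, hb, hbx⟩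
  obtain ⟨w1, hw1, w2, hw2, h12⟩ := (Set.one_lt_ncard (Set.toFinite _)).mp (htwo r hr)
  have hw1adj : T.Adj r w1 := hw1
  have hw2adj : T.Adj r w2 := hw2
  have hsing : ∀ {a b : V} (h : T.Adj a b), (Walk.cons h (Walk.nil : T.Walk b b)).IsPath := by
    intro a b h
    simp [Walk.cons_isPath_iff, h.ne]
  have hkey : ∀ v : V, ∃ w : V, heightV T v = d →
      T.Adj v w ∧ heightV T w = d - 1 ∧ w ≠ w2 ∧
      ((v = r ∧ w = w1) ∨ (v ≠ r ∧ ∀ P : T.Walk w r, P.IsPath → P.getVert 1 = v)) := by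
    intro v
    by_cases hv : heightV T v = d
    · by_cases hvr : v = r
      · subst hvr
        exact ⟨w1, fun _ => ⟨hw1adj, hnb v hv w1 hw1adj, h12, Or.inl ⟨rfl, rfl⟩⟩⟩
      · obtain ⟨P, hP⟩ := (Walk.toPath (Classical.choice (hconn.preconnected v r)))
        obtain ⟨x, h1, q, rfl⟩ := Walk.exists_eq_cons_of_ne hvr P
        obtain ⟨w, hadj, hwx⟩ := hpick v hv x
        refine ⟨w, fun _ => ⟨hadj, hnb v hv w hadj, ?_,
          Or.inr ⟨hvr, fun P' hP' => claimA hT h1 q hP hadj hwx P' hP'⟩⟩⟩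
        intro hww2
        subst hww2
        have h2 := claimA hT h1 q hP hadj hwx
          (Walk.cons hw2adj.symm Walk.nil) (hsing hw2adj.symm)
        rw [Walk.getVert_cons _ _ one_ne_zero, Nat.sub_self, Walk.getVert_zero] at h2
        exact hvr h2.symm
    · exact ⟨w1, fun h => absurd h hv⟩
  choose f hf using hkey
  have hmaps : ∀ v ∈ {v | heightV T v = d},
      f v ∈ {v | heightV T v = d - 1} \ {w2} := by
    intro v hv
    obtain ⟨-, h1, h2, -⟩ := hf v hv
    exact ⟨h1, h2⟩
  have hinj : Set.InjOn f {v | heightV T v = d} := by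
    intro u hu v hv huv
    obtain ⟨hadju, -, -, Hu⟩ := hf u hu
    obtain ⟨hadjv, -, -, Hv⟩ := hf v hv
    rcases Hu with ⟨hur, hfu⟩ | ⟨hur, hu2⟩
    · rcases Hv with ⟨hvr, hfv⟩ | ⟨hvr, hv2⟩
      · rw [hur, hvr]
      · -- v ≠ r, f v = f u = w1 adjacent to r
        have hadj : T.Adj (f v) r := by rw [← huv, hfu]; exact hw1adj.symm
        have := hv2 (Walk.cons hadj Walk.nil) (hsing hadj)
        rw [Walk.getVert_cons _ _ one_ne_zero, Nat.sub_self, Walk.getVert_zero] at this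
        exact absurd this.symm hvr
    · rcases Hv with ⟨hvr, hfv⟩ | ⟨hvr, hv2⟩
      · have hadj : T.Adj (f u) r := by rw [huv, hfv]; exact hw1adj.symm
        have := hu2 (Walk.cons hadj Walk.nil) (hsing hadj)
        rw [Walk.getVert_cons _ _ one_ne_zero, Nat.sub_self, Walk.getVert_zero] at this
        exact absurd this.symm hur
      · obtain ⟨P, hP⟩ := Walk.toPath (Classical.choice (hconn.preconnected (f u) r))
        have h1 := hu2 P hP
        have h2 := hv2 (P.copy (by rw [huv]) rfl) ((Walk.isPath_copy P _ rfl).mpr hP)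
        rw [Walk.getVert_copy] at h2
        rw [← h1, ← h2]
  have hw2mem : w2 ∈ {v | heightV T v = d - 1} := hnb r hr w2 hw2adj
  calc ({v | heightV T v = d}).ncard
      ≤ ({v | heightV T v = d - 1} \ {w2}).ncard :=
        Set.ncard_le_ncard_of_injOn f hmaps hinj (Set.toFinite _)
    _ < ({v | heightV T v = d - 1}).ncard :=
        Set.ncard_diff_singleton_lt_of_mem hw2mem (Set.toFinite _)
end

section
/- Let T be a balanced tree that contains two leaves ℓ₁ and ℓ₂ with dist(ℓ₁, ℓ₂) = 4. Then T is not well-totally dominated. -/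
open SimpleGraph Set

section Aux

variable {V : Type*} [Fintype V] {T : SimpleGraph V}

/-- Every TDS contains a minimal TDS. -/
lemma exists_minTDS_subset (T : SimpleGraph V) (D : Set V) (hD : IsTDS T D) :
    ∃ M, M ⊆ D ∧ IsMinTDS T M := by
  obtain ⟨n, hn⟩ : ∃ n, D.ncard = n := ⟨_, rfl⟩
  induction n using Nat.strong_induction_on generalizing D with
  | _ n ih =>
    by_cases hmin : ∀ D' : Set V, D' ⊂ D → ¬ IsTDS T D'
    · exact ⟨D, subset_rfl, hD, hmin⟩
    · push_neg at hmin
      obtain ⟨D', hsub, hD'⟩ := hmin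
      obtain ⟨M, hM, hMmin⟩ :=
        ih D'.ncard (hn ▸ Set.ncard_lt_ncard hsub (Set.toFinite D)) D' hD' rfl
      exact ⟨M, hM.trans hsub.subset, hMmin⟩

/-- A vertex adjacent to a leaf, having another neighbor, has height 1. -/
lemma heightV_eq_one (hconn : T.Connected) {x ℓ w : V} (hℓ : IsLeaf T ℓ)
    (hadj : T.Adj x ℓ) (hw : T.Adj x w) (hne : w ≠ ℓ) : heightV T x = 1 := by
  have hS1 : (1 : ℕ) ∈ {d | ∃ l, IsLeaf T l ∧ T.dist x l = d} :=
    ⟨ℓ, hℓ, SimpleGraph.dist_eq_one_iff_adj.mpr hadj⟩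
  have hle : heightV T x ≤ 1 := Nat.sInf_le hS1
  have hne0 : heightV T x ≠ 0 := by
    intro h0
    rw [heightV] at h0
    rcases Nat.sInf_eq_zero.mp h0 with h | h
    · obtain ⟨l, hl, hd⟩ := h
      have hxl : x = l := (hconn.dist_eq_zero_iff).mp hd
      subst hxl
      obtain ⟨a, ha⟩ := Set.ncard_eq_one.mp hl
      have h1 : ℓ ∈ T.neighborSet x := hadj
      have h2 : w ∈ T.neighborSet x := hw
      rw [ha, Set.mem_singleton_iff] at h1 h2
      exact hne (h2.trans h1.symm)
    · rw [h] at hS1; exact hS1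
  omega

/-- In a connected graph with at least two vertices, every vertex has a neighbor. -/
lemma exists_neighbor (hconn : T.Connected) {a b : V} (hab : a ≠ b) (v : V) :
    ∃ w, T.Adj v w := by
  have : ∃ t, v ≠ t := by
    rcases eq_or_ne v a with rfl | h
    · exact ⟨b, hab⟩
    · exact ⟨a, h⟩
  obtain ⟨t, hvt⟩ := this
  have hd : T.dist v t ≠ 0 := fun h => hvt ((hconn.dist_eq_zero_iff).mp h)
  obtain ⟨p, hp⟩ := SimpleGraph.exists_walk_of_dist_ne_zero hd
  have h1 : 0 < p.length := by omega
  have := p.adj_getVert_succ h1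
  rw [p.getVert_zero] at this
  exact ⟨_, this⟩

end Aux

theorem stmt11 {V : Type*} [Fintype V] (T : SimpleGraph V) (htree : T.IsTree)
    (hbal : IsBalanced T)
    (ℓ₁ ℓ₂ : V) (h₁ : IsLeaf T ℓ₁) (h₂ : IsLeaf T ℓ₂) (hdist : T.dist ℓ₁ ℓ₂ = 4) :
    ¬ WTD T := by
  intro hW
  have hconn := htree.isConnected
  obtain ⟨p, hp⟩ := hconn.exists_walk_length_eq_dist ℓ₁ ℓ₂
  rw [hdist] at hp
  set x := p.getVert 1 with hxdef
  set y := p.getVert 2 with hydef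
  set z := p.getVert 3 with hzdef
  have h4 : p.getVert 4 = ℓ₂ := by rw [← hp]; exact p.getVert_length
  have hax : T.Adj ℓ₁ x := by
    have := p.adj_getVert_succ (i := 0) (by omega)
    rwa [p.getVert_zero] at this
  have haxy : T.Adj x y := p.adj_getVert_succ (by omega)
  have hayz : T.Adj y z := p.adj_getVert_succ (by omega)
  have hazl : T.Adj z ℓ₂ := by
    have := p.adj_getVert_succ (i := 3) (by omega)
    rwa [h4] at this
  have dadj : ∀ {a b : V}, T.Adj a b → T.dist a b = 1 :=
    fun h => SimpleGraph.dist_eq_one_iff_adj.mpr h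
  -- basic distance facts
  have hne12 : ℓ₁ ≠ ℓ₂ := by
    intro h; rw [h, SimpleGraph.dist_self] at hdist; omega
  have hnxl2 : ¬ T.Adj x ℓ₂ := by
    intro h
    have := hconn.dist_triangle (u := ℓ₁) (v := x) (w := ℓ₂)
    rw [hdist, dadj hax, dadj h] at this; omega
  have hnzl1 : ¬ T.Adj z ℓ₁ := by
    intro h
    have := hconn.dist_triangle (u := ℓ₁) (v := z) (w := ℓ₂)
    rw [hdist, SimpleGraph.dist_comm (u := ℓ₁), dadj h, dadj hazl] at this; omega
  have hnxz : ¬ T.Adj x z := by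
    intro h
    have h1 := hconn.dist_triangle (u := ℓ₁) (v := x) (w := ℓ₂)
    have h2 := hconn.dist_triangle (u := x) (v := z) (w := ℓ₂)
    rw [hdist, dadj hax] at h1
    rw [dadj h, dadj hazl] at h2; omega
  have hxz : x ≠ z := by
    intro h
    have h1 := hconn.dist_triangle (u := ℓ₁) (v := x) (w := ℓ₂)
    rw [hdist, dadj hax, h, dadj hazl] at h1; omega
  have hyl1 : y ≠ ℓ₁ := by
    intro h
    have h1 := hconn.dist_triangle (u := ℓ₁) (v := z) (w := ℓ₂)
    have h2 : T.dist ℓ₁ z = 1 := by rw [← h]; exact dadj hayz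
    rw [hdist, h2, dadj hazl] at h1; omega
  have hyl2 : y ≠ ℓ₂ := fun h => hnxl2 (h ▸ haxy)
  have hxl2 : x ≠ ℓ₂ := by
    intro h
    rw [← h, dadj hax] at hdist; omega
  have hzl1 : z ≠ ℓ₁ := by
    intro h
    rw [← h] at hdist
    rw [dadj hazl] at hdist; omega
  -- leaf neighborhoods
  have hN1 : T.neighborSet ℓ₁ = {x} := by
    obtain ⟨a, ha⟩ := Set.ncard_eq_one.mp h₁
    have hx : x ∈ T.neighborSet ℓ₁ := hax
    rw [ha, Set.mem_singleton_iff] at hx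
    rw [ha, hx]
  have hN2 : T.neighborSet ℓ₂ = {z} := by
    obtain ⟨a, ha⟩ := Set.ncard_eq_one.mp h₂
    have hx : z ∈ T.neighborSet ℓ₂ := hazl.symm
    rw [ha, Set.mem_singleton_iff] at hx
    rw [ha, hx]
  set A : Set V := (T.neighborSet x ∪ T.neighborSet z) \ {ℓ₁, ℓ₂} with hAdef
  have hxA : x ∉ A := by
    rintro ⟨h, -⟩
    rcases h with h | h
    · exact T.loopless.irrefl x h
    · exact hnxz h.symm
  have hzA : z ∉ A := by
    rintro ⟨h, -⟩
    rcases h with h | h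
    · exact hnxz h
    · exact T.loopless.irrefl z h
  have hl1A : ℓ₁ ∉ A := fun h => h.2 (Or.inl rfl)
  have hl2A : ℓ₂ ∉ A := fun h => h.2 (Or.inr rfl)
  -- Step A : the complement of A is a TDS
  have hTDS0 : IsTDS T Aᶜ := by
    rw [IsTDS]
    apply Set.eq_univ_of_forall
    intro v
    by_cases hv1 : v = ℓ₁
    · exact ⟨x, hxA, hv1 ▸ hax.symm⟩
    by_cases hv2 : v = ℓ₂
    · exact ⟨z, hzA, hv2 ▸ hazl⟩
    by_cases hvx : v = x
    · exact ⟨ℓ₁, hl1A, hvx ▸ hax⟩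
    by_cases hvz : v = z
    · exact ⟨ℓ₂, hl2A, hvz ▸ hazl.symm⟩
    by_cases hvNx : T.Adj x v
    · exact ⟨x, hxA, hvNx⟩
    by_cases hvNz : T.Adj z v
    · exact ⟨z, hzA, hvNz⟩
    -- main case
    by_contra hcon
    have hallA : ∀ w, T.Adj v w → w ∈ A := by
      intro w hw
      by_contra hwA
      exact hcon ⟨w, hwA, hw.symm⟩
    obtain ⟨u, hu⟩ := exists_neighbor hconn hne12 v
    have huA := hallA u hu
    by_cases h2 : ∃ u', T.Adj v u' ∧ u' ≠ u
    · -- v has two distinct neighbors, both in A : contradiction with acyclicity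
      obtain ⟨u', hu', huu⟩ := h2
      have hu'A := hallA u' hu'
      have key2 : ∀ a b : V, T.Adj v a → T.Adj v b → a ≠ b → T.Adj x a → ¬ T.Adj x b := by
        intro a b hva hvb hab hxa hxb
        -- two distinct paths from v to x
        have e1 : v ≠ a := hva.ne
        have e2 : v ≠ b := hvb.ne
        have e3 : a ≠ x := hxa.ne'
        have e4 : b ≠ x := hxb.ne'
        have hp1 : (Walk.cons hva (Walk.cons hxa.symm Walk.nil) : T.Walk v x).IsPath := by
          simp [Walk.isPath_def]; tauto
        have hp2 : (Walk.cons hvb (Walk.cons hxb.symm Walk.nil) : T.Walk v x).IsPath := by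
          simp [Walk.isPath_def]; tauto
        obtain ⟨q, -, huniq⟩ := htree.existsUnique_path v x
        have := (huniq _ hp1).trans (huniq _ hp2).symm
        have hs := congrArg Walk.support this
        simp [Walk.support_cons] at hs
        exact hab hs
      have key2z : ∀ a b : V, T.Adj v a → T.Adj v b → a ≠ b → T.Adj z a → ¬ T.Adj z b := by
        intro a b hva hvb hab hza hzb
        have e1 : v ≠ a := hva.ne
        have e2 : v ≠ b := hvb.ne
        have e3 : a ≠ z := hza.ne'
        have e4 : b ≠ z := hzb.ne'
        have hp1 : (Walk.cons hva (Walk.cons hza.symm Walk.nil) : T.Walk v z).IsPath := by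
          simp [Walk.isPath_def]; tauto
        have hp2 : (Walk.cons hvb (Walk.cons hzb.symm Walk.nil) : T.Walk v z).IsPath := by
          simp [Walk.isPath_def]; tauto
        obtain ⟨q, -, huniq⟩ := htree.existsUnique_path v z
        have := (huniq _ hp1).trans (huniq _ hp2).symm
        have hs := congrArg Walk.support this
        simp [Walk.support_cons] at hs
        exact hab hs
      -- mixed case helper
      have keymix : ∀ a b : V, T.Adj v a → T.Adj v b → a ≠ b → T.Adj x a → T.Adj z b → False := by
        intro a b hva hvb hab hxa hzb
        -- path x - a - v - b - z versus x - y - z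
        have hax' : a ≠ x := hxa.ne'
        have haz : a ≠ z := fun h => hnxz (h ▸ hxa)
        have hbx : b ≠ x := fun h => hnxz (h ▸ hzb).symm
        have hbz : b ≠ z := hzb.ne'
        have e1 : x ≠ a := hax'.symm
        have e2 : x ≠ v := fun h => hvx h.symm
        have e3 : x ≠ b := hbx.symm
        have e4 : a ≠ v := hva.ne'
        have e5 : a ≠ b := hab
        have e6 : a ≠ z := haz
        have e7 : v ≠ b := hvb.ne
        have e8 : v ≠ z := hvz
        have e9 : b ≠ z := hbz
        have hp1 : (Walk.cons hxa (Walk.cons hva.symm (Walk.cons hvb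
            (Walk.cons hzb.symm Walk.nil))) : T.Walk x z).IsPath := by
          simp [Walk.isPath_def]; tauto
        have exy : x ≠ y := haxy.ne
        have eyz : y ≠ z := hayz.ne
        have hp2 : (Walk.cons haxy (Walk.cons hayz Walk.nil) : T.Walk x z).IsPath := by
          simp [Walk.isPath_def]; tauto
        obtain ⟨q, -, huniq⟩ := htree.existsUnique_path x z
        have := (huniq _ hp1).trans (huniq _ hp2).symm
        have hl := congrArg Walk.length this
        simp [Walk.length_cons] at hl
      rcases huA.1 with hux | huz <;> rcases hu'A.1 with hu'x | hu'z
      · exact key2 u u' hu hu' huu.symm hux hu'x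
      · exact keymix u u' hu hu' huu.symm hux hu'z
      · exact keymix u' u hu' hu huu hu'x huz
      · exact key2z u u' hu hu' huu.symm huz hu'z
    · -- v is a leaf; use balancedness
      push_neg at h2
      have hvleaf : IsLeaf T v := by
        have : T.neighborSet v = {u} := by
          ext w
          simp only [mem_neighborSet, Set.mem_singleton_iff]
          exact ⟨fun h => h2 w h, fun h => h ▸ hu⟩
        rw [IsLeaf, this, Set.ncard_singleton]
      rcases huA.1 with hux | huz
      · -- u adjacent to x
        have hhx : heightV T x = 1 := heightV_eq_one hconn h₁ hax.symm haxy hyl1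
        have hhu : heightV T u = 1 :=
          heightV_eq_one hconn hvleaf hu.symm hux.symm (Ne.symm hvx)
        exact hbal x u hux (hhx.trans hhu.symm)
      · -- u adjacent to z
        have hhz : heightV T z = 1 := heightV_eq_one hconn h₂ hazl hayz.symm hyl2
        have hhu : heightV T u = 1 :=
          heightV_eq_one hconn hvleaf hu.symm huz.symm (Ne.symm hvz)
        exact hbal z u huz (hhz.trans hhu.symm)
  -- Step B/C : minimal TDS inside Aᶜ
  obtain ⟨D₁, hD₁sub, hD₁⟩ := exists_minTDS_subset T Aᶜ hTDS0
  have hdom : ∀ v : V, ∃ w ∈ D₁, T.Adj w v := by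
    intro v
    have : v ∈ nbhd T D₁ := by rw [hD₁.1]; trivial
    exact this
  have hxD : x ∈ D₁ := by
    obtain ⟨w, hwD, hw⟩ := hdom ℓ₁
    have : w ∈ T.neighborSet ℓ₁ := hw.symm
    rw [hN1, Set.mem_singleton_iff] at this
    exact this ▸ hwD
  have hzD : z ∈ D₁ := by
    obtain ⟨w, hwD, hw⟩ := hdom ℓ₂
    have : w ∈ T.neighborSet ℓ₂ := hw.symm
    rw [hN2, Set.mem_singleton_iff] at this
    exact this ▸ hwD
  have hl1D : ℓ₁ ∈ D₁ := by
    obtain ⟨w, hwD, hw⟩ := hdom x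
    have hwN : w ∈ T.neighborSet x ∪ T.neighborSet z := Or.inl hw.symm
    have hwA : w ∉ A := hD₁sub hwD
    have : w ∈ ({ℓ₁, ℓ₂} : Set V) := by
      by_contra h
      exact hwA ⟨hwN, h⟩
    rcases this with h | h
    · exact h ▸ hwD
    · rw [Set.mem_singleton_iff] at h
      exact absurd (h ▸ hw).symm hnxl2
  have hl2D : ℓ₂ ∈ D₁ := by
    obtain ⟨w, hwD, hw⟩ := hdom z
    have hwN : w ∈ T.neighborSet x ∪ T.neighborSet z := Or.inr hw.symm
    have hwA : w ∉ A := hD₁sub hwD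
    have : w ∈ ({ℓ₁, ℓ₂} : Set V) := by
      by_contra h
      exact hwA ⟨hwN, h⟩
    rcases this with h | h
    · exact absurd (h ▸ hw).symm hnzl1
    · rw [Set.mem_singleton_iff] at h
      exact h ▸ hwD
  -- Step D : a smaller TDS
  set D₂ : Set V := insert y (D₁ \ {ℓ₁, ℓ₂}) with hD₂def
  have hTDS2 : IsTDS T D₂ := by
    rw [IsTDS]
    apply Set.eq_univ_of_forall
    intro v
    obtain ⟨w, hwD, hw⟩ := hdom v
    by_cases hw1 : w = ℓ₁
    · subst hw1
      have : v ∈ T.neighborSet w := hw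
      rw [hN1, Set.mem_singleton_iff] at this
      subst this
      exact ⟨y, Or.inl rfl, haxy.symm⟩
    by_cases hw2 : w = ℓ₂
    · subst hw2
      have : v ∈ T.neighborSet w := hw
      rw [hN2, Set.mem_singleton_iff] at this
      subst this
      exact ⟨y, Or.inl rfl, hayz⟩
    · exact ⟨w, Or.inr ⟨hwD, by simp [hw1, hw2]⟩, hw⟩
  obtain ⟨D₃, hD₃sub, hD₃⟩ := exists_minTDS_subset T D₂ hTDS2
  -- Step E : cardinality contradiction
  have hpair : ({ℓ₁, ℓ₂} : Set V) ⊆ D₁ := by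
    rintro w (rfl | rfl)
    · exact hl1D
    · exact hl2D
  have hcard2 : ({ℓ₁, ℓ₂} : Set V).ncard = 2 := Set.ncard_pair hne12
  have hge2 : 2 ≤ D₁.ncard := hcard2 ▸ Set.ncard_le_ncard hpair (Set.toFinite _)
  have hdiff : (D₁ \ {ℓ₁, ℓ₂}).ncard = D₁.ncard - 2 := by
    rw [Set.ncard_diff hpair, hcard2]
  have hD₂card : D₂.ncard ≤ D₁.ncard - 1 := by
    have := Set.ncard_insert_le y (D₁ \ {ℓ₁, ℓ₂})
    rw [← hD₂def, hdiff] at this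
    omega
  have hD₃card : D₃.ncard ≤ D₂.ncard := Set.ncard_le_ncard hD₃sub (Set.toFinite _)
  have := hW D₃ D₁ hD₃ hD₁
  omega
end

section
/- Let T be a balanced tree of height exactly 2. Then T contains two leaves at distance 4, and hence T is not well-totally dominated. -/
open SimpleGraph Set

lemma nbhd_mono' {V : Type*} (G : SimpleGraph V) {D D' : Set V} (h : D ⊆ D') :
    nbhd G D ⊆ nbhd G D' := fun u ⟨v, hv, ha⟩ => ⟨v, h hv, ha⟩

lemma tds_mono' {V : Type*} (G : SimpleGraph V) {D D' : Set V} (h : D ⊆ D')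
    (ht : IsTDS G D) : IsTDS G D' :=
  Set.eq_univ_of_univ_subset (ht ▸ nbhd_mono' G h)

lemma minTDS_of_single' {V : Type*} (G : SimpleGraph V) {D : Set V} (ht : IsTDS G D)
    (h : ∀ x ∈ D, ¬ IsTDS G (D \ {x})) : IsMinTDS G D := by
  refine ⟨ht, fun D' hss htds => ?_⟩
  obtain ⟨x, hxD, hxD'⟩ := Set.exists_of_ssubset hss
  exact h x hxD (tds_mono' G (fun y hy => ⟨hss.1 hy, fun he => hxD' (he ▸ hy)⟩) htds)

lemma exists_adj_of_ne' {V : Type*} {T : SimpleGraph V} (hconn : T.Connected) {u v : V}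
    (h : u ≠ v) : ∃ w, T.Adj u w := by
  obtain ⟨p⟩ := hconn.preconnected u v
  cases p with
  | nil => exact absurd rfl h
  | cons hadj q => exact ⟨_, hadj⟩

lemma leaf_dist' {V : Type*} {T : SimpleGraph V} (hconn : T.Connected) {ℓ s u : V}
    (hN : T.neighborSet ℓ = {s}) (hne : u ≠ ℓ) :
    T.dist ℓ u = T.dist s u + 1 := by
  have hadj : T.Adj ℓ s := by rw [← SimpleGraph.mem_neighborSet, hN]; rfl
  obtain ⟨p, hp⟩ := hconn.exists_walk_length_eq_dist ℓ u
  apply le_antisymm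
  · calc T.dist ℓ u ≤ T.dist ℓ s + T.dist s u := hconn.dist_triangle
      _ = T.dist s u + 1 := by rw [SimpleGraph.dist_eq_one_iff_adj.mpr hadj]; omega
  · cases p with
    | nil => exact absurd rfl hne
    | cons h q =>
      rename_i x
      have hx : x ∈ T.neighborSet ℓ := h
      rw [hN, Set.mem_singleton_iff] at hx
      subst hx
      have hq := SimpleGraph.dist_le q
      simp [SimpleGraph.Walk.length_cons] at hp
      omega

theorem stmt13 {V : Type*} [Fintype V] (T : SimpleGraph V) (htree : T.IsTree)
    (hbal : IsBalanced T) (hh : heightG T = 2) :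
    (∃ ℓ₁ ℓ₂ : V, IsLeaf T ℓ₁ ∧ IsLeaf T ℓ₂ ∧ T.dist ℓ₁ ℓ₂ = 4) ∧ ¬ WTD T := by
  classical
  have hconn := htree.isConnected
  have hrange : {d | ∃ v, heightV T v = d} = Set.range (heightV T) := rfl
  have hbdd : BddAbove (Set.range (heightV T)) := (Set.finite_range _).bddAbove
  have hbound : ∀ v, heightV T v ≤ 2 := fun v => by
    have := le_csSup hbdd (Set.mem_range_self (f := heightV T) v)
    rwa [← hrange, show sSup {d | ∃ v, heightV T v = d} = heightG T from rfl, hh] at this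
  have hex2 : ∃ c, heightV T c = 2 := by
    have hne : (Set.range (heightV T)).Nonempty := by
      by_contra h
      rw [Set.not_nonempty_iff_eq_empty] at h
      have h0 : heightG T = 0 := by
        rw [heightG, hrange, h, csSup_empty]; rfl
      omega
    have := Nat.sSup_mem hne hbdd
    rwa [← hrange, show sSup {d | ∃ v, heightV T v = d} = heightG T from rfl, hh] at this
  obtain ⟨c, hc⟩ := hex2
  -- leaves exist
  have hleaf_ex : ∃ ℓ, IsLeaf T ℓ := by
    by_contra h
    push_neg at h
    have hempty : {d | ∃ ℓ, IsLeaf T ℓ ∧ T.dist c ℓ = d} = ∅ := by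
      ext d; simp only [Set.mem_setOf_eq, Set.mem_empty_iff_false, iff_false, not_exists]
      exact fun ℓ hℓ => absurd hℓ.1 (h ℓ)
    have : heightV T c = 0 := by rw [heightV, hempty, Nat.sInf_empty]
    omega
  have hLne : ∀ v : V, {d | ∃ ℓ, IsLeaf T ℓ ∧ T.dist v ℓ = d}.Nonempty := fun v => by
    obtain ⟨ℓ, hℓ⟩ := hleaf_ex
    exact ⟨T.dist v ℓ, ℓ, hℓ, rfl⟩
  have hmem : ∀ v : V, ∃ ℓ, IsLeaf T ℓ ∧ T.dist v ℓ = heightV T v := fun v =>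
    Nat.sInf_mem (hLne v)
  have hle : ∀ v ℓ, IsLeaf T ℓ → heightV T v ≤ T.dist v ℓ := fun v ℓ h =>
    Nat.sInf_le ⟨ℓ, h, rfl⟩
  have hzero : ∀ v, heightV T v = 0 ↔ IsLeaf T v := by
    intro v
    constructor
    · intro h0
      obtain ⟨ℓ, hℓ, hd⟩ := hmem v
      rw [h0] at hd
      rwa [(hconn.dist_eq_zero_iff).mp hd]
    · intro hv
      have := hle v v hv
      rwa [SimpleGraph.dist_self, Nat.le_zero] at this
  have hsupp : ∀ ℓ, IsLeaf T ℓ → ∃ s, T.neighborSet ℓ = {s} := fun ℓ h =>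
    Set.ncard_eq_one.mp h
  have hsupp1 : ∀ ℓ s, IsLeaf T ℓ → T.neighborSet ℓ = {s} → heightV T s = 1 := by
    intro ℓ s hℓ hN
    have hadj : T.Adj ℓ s := by rw [← SimpleGraph.mem_neighborSet, hN]; rfl
    have h1 : heightV T s ≤ 1 := by
      have := hle s ℓ hℓ
      rwa [SimpleGraph.dist_comm, SimpleGraph.dist_eq_one_iff_adj.mpr hadj] at this
    have h0 : heightV T s ≠ 0 := fun h0 =>
      hbal ℓ s hadj (by rw [(hzero ℓ).mpr hℓ, h0])
    omega
  have hadjleaf : ∀ s, heightV T s = 1 → ∃ ℓ, IsLeaf T ℓ ∧ T.Adj s ℓ := by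
    intro s hs
    obtain ⟨ℓ, hℓ, hd⟩ := hmem s
    rw [hs] at hd
    exact ⟨ℓ, hℓ, SimpleGraph.dist_eq_one_iff_adj.mp hd⟩
  have hnbr2 : ∀ u w, heightV T u = 2 → T.Adj u w → heightV T w = 1 := by
    intro u w hu hadj
    have hb := hbound w
    have hne := hbal u w hadj
    have h0 : heightV T w ≠ 0 := by
      intro h0
      have hwleaf := (hzero w).mp h0
      have := hle u w hwleaf
      rw [SimpleGraph.dist_eq_one_iff_adj.mpr hadj] at this
      omega
    omega
  obtain ⟨ℓ0, hℓ0, hd0⟩ := hmem c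
  rw [hc] at hd0
  have hcne : c ≠ ℓ0 := by
    intro h
    rw [h, SimpleGraph.dist_self] at hd0
    omega
  have hnbr : ∀ u : V, ∃ w, T.Adj u w := by
    intro u
    by_cases h : u = c
    · subst h; exact exists_adj_of_ne' hconn hcne
    · exact exists_adj_of_ne' hconn h
  have hcleaf : ¬ IsLeaf T c := fun h => by have := (hzero c).mpr h; omega
  have htwo : 1 < (T.neighborSet c).ncard := by
    obtain ⟨w, hw⟩ := hnbr c
    have hpos : 0 < (T.neighborSet c).ncard := (Set.ncard_pos (Set.toFinite _)).mpr ⟨w, hw⟩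
    have hne1 : (T.neighborSet c).ncard ≠ 1 := hcleaf
    omega
  obtain ⟨s1, s2, hs1, hs2, hs12⟩ := (Set.one_lt_ncard_iff (Set.toFinite _)).mp htwo
  have hcs1 : T.Adj c s1 := hs1
  have hcs2 : T.Adj c s2 := hs2
  have hh1 : heightV T s1 = 1 := hnbr2 c s1 hc hcs1
  have hh2 : heightV T s2 = 1 := hnbr2 c s2 hc hcs2
  -- leaves attached to s1, s2
  obtain ⟨ℓ1, hℓ1, hadj1⟩ := hadjleaf s1 hh1
  obtain ⟨ℓ2, hℓ2, hadj2⟩ := hadjleaf s2 hh2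
  have hN1 : T.neighborSet ℓ1 = {s1} := by
    obtain ⟨t, ht⟩ := hsupp ℓ1 hℓ1
    have hmem1 : s1 ∈ T.neighborSet ℓ1 := hadj1.symm
    rw [ht, Set.mem_singleton_iff] at hmem1
    rw [ht, hmem1]
  have hN2 : T.neighborSet ℓ2 = {s2} := by
    obtain ⟨t, ht⟩ := hsupp ℓ2 hℓ2
    have hmem2 : s2 ∈ T.neighborSet ℓ2 := hadj2.symm
    rw [ht, Set.mem_singleton_iff] at hmem2
    rw [ht, hmem2]
  -- distance 4
  have hnadj12 : ¬ T.Adj s1 s2 := fun h => hbal s1 s2 h (by rw [hh1, hh2])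
  have hds12 : T.dist s1 s2 = 2 := by
    have hub : T.dist s1 s2 ≤ 2 := by
      calc T.dist s1 s2 ≤ T.dist s1 c + T.dist c s2 := hconn.dist_triangle
        _ = 2 := by
            rw [SimpleGraph.dist_eq_one_iff_adj.mpr hcs1.symm,
              SimpleGraph.dist_eq_one_iff_adj.mpr hcs2]
    have h0 : T.dist s1 s2 ≠ 0 := fun h => hs12 (hconn.dist_eq_zero_iff.mp h)
    have h1 : T.dist s1 s2 ≠ 1 := fun h => hnadj12 (SimpleGraph.dist_eq_one_iff_adj.mp h)
    omega
  have hs1ℓ2 : s1 ≠ ℓ2 := by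
    intro h
    have := (hzero ℓ2).mpr hℓ2
    rw [← h, hh1] at this
    omega
  have hd3 : T.dist ℓ2 s1 = 3 := by
    rw [leaf_dist' hconn hN2 hs1ℓ2, SimpleGraph.dist_comm, hds12]
  have hℓ12 : ℓ2 ≠ ℓ1 := by
    intro h
    rw [h, hN1] at hN2
    exact hs12 (Set.singleton_eq_singleton_iff.mp hN2)
  have hd4 : T.dist ℓ1 ℓ2 = 4 := by
    rw [leaf_dist' hconn hN1 hℓ12, SimpleGraph.dist_comm, hd3]
  refine ⟨⟨ℓ1, ℓ2, hℓ1, hℓ2, hd4⟩, ?_⟩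
  -- now the ¬ WTD part
  set S : Set V := {v | heightV T v = 1} with hSdef
  have hch : ∀ s : V, ∃ ℓ, heightV T s = 1 → (IsLeaf T ℓ ∧ T.Adj s ℓ) := by
    intro s
    by_cases h : heightV T s = 1
    · obtain ⟨ℓ, h1, h2⟩ := hadjleaf s h
      exact ⟨ℓ, fun _ => ⟨h1, h2⟩⟩
    · exact ⟨c, fun h' => absurd h' h⟩
  choose f hf using hch
  have hfleaf : ∀ s ∈ S, IsLeaf T (f s) := fun s hs => (hf s hs).1
  have hfadj : ∀ s ∈ S, T.Adj s (f s) := fun s hs => (hf s hs).2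
  have hfN : ∀ s ∈ S, T.neighborSet (f s) = {s} := by
    intro s hs
    obtain ⟨t, ht⟩ := hsupp (f s) (hfleaf s hs)
    have hm : s ∈ T.neighborSet (f s) := (hfadj s hs).symm
    rw [ht, Set.mem_singleton_iff] at hm
    rw [ht, hm]
  have hfht : ∀ s ∈ S, heightV T (f s) = 0 := fun s hs => (hzero _).mpr (hfleaf s hs)
  have hfinj : Set.InjOn f S := by
    intro a ha b hb he
    have h1 : a ∈ T.neighborSet (f b) := by
      rw [← he]
      exact (hfadj a ha).symm
    rw [hfN b hb, Set.mem_singleton_iff] at h1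
    exact h1
  have hs1S : s1 ∈ S := hh1
  have hs2S : s2 ∈ S := hh2
  set S' : Set V := {s ∈ S | ¬ T.Adj c s} with hS'def
  set DA : Set V := S ∪ f '' S with hDAdef
  set DB : Set V := (S ∪ f '' S') ∪ {c} with hDBdef
  -- DA is a TDS
  have hcover : ∀ (D : Set V), S ⊆ D → ∀ u, heightV T u ≠ 1 → ∃ v ∈ D, T.Adj v u := by
    intro D hSD u hu
    have hb := hbound u
    have h012 : heightV T u = 0 ∨ heightV T u = 2 := by omega
    rcases h012 with h | h
    · obtain ⟨s, hN⟩ := hsupp u ((hzero u).mp h)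
      have hsh : heightV T s = 1 := hsupp1 u s ((hzero u).mp h) hN
      have hadj : T.Adj u s := by rw [← SimpleGraph.mem_neighborSet, hN]; rfl
      exact ⟨s, hSD hsh, hadj.symm⟩
    · obtain ⟨w, hw⟩ := hnbr u
      exact ⟨w, hSD (hnbr2 u w h hw), hw.symm⟩
  have htdsA : IsTDS T DA := by
    apply Set.eq_univ_of_forall
    intro u
    by_cases h : heightV T u = 1
    · exact ⟨f u, Or.inr ⟨u, h, rfl⟩, (hfadj u h).symm⟩
    · exact hcover DA Set.subset_union_left u h
  have htdsB : IsTDS T DB := by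
    apply Set.eq_univ_of_forall
    intro u
    by_cases h : heightV T u = 1
    · by_cases hcu : T.Adj c u
      · exact ⟨c, Or.inr rfl, hcu⟩
      · exact ⟨f u, Or.inl (Or.inr ⟨u, ⟨h, hcu⟩, rfl⟩), (hfadj u h).symm⟩
    · exact hcover DB (Set.subset_union_left.trans Set.subset_union_left) u h
  -- minimality of DA
  have hminA : IsMinTDS T DA := by
    apply minTDS_of_single' T htdsA
    rintro x hx hT'
    have hT'' : nbhd T (DA \ {x}) = Set.univ := hT'
    rcases hx with hxS | ⟨s, hsS, rfl⟩
    · have hcov : f x ∈ nbhd T (DA \ {x}) := hT''.symm ▸ Set.mem_univ (f x)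
      obtain ⟨v, ⟨hvD, hvx⟩, hadj⟩ := hcov
      have hv : v ∈ T.neighborSet (f x) := hadj.symm
      rw [hfN x hxS, Set.mem_singleton_iff] at hv
      exact hvx hv
    · have hcov : s ∈ nbhd T (DA \ {f s}) := hT''.symm ▸ Set.mem_univ s
      obtain ⟨v, ⟨hvD, hvx⟩, hadj⟩ := hcov
      rcases hvD with hvS | ⟨t, htS, rfl⟩
      · exact hbal v s hadj (by rw [hvS, hsS])
      · have hv : s ∈ T.neighborSet (f t) := hadj
        rw [hfN t htS, Set.mem_singleton_iff] at hv
        exact hvx (by rw [hv]; rfl)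
  -- minimality of DB
  have hminB : IsMinTDS T DB := by
    apply minTDS_of_single' T htdsB
    rintro x hx hT'
    have hT'' : nbhd T (DB \ {x}) = Set.univ := hT'
    rcases hx with (hxS | ⟨s, hsS', rfl⟩) | hxc
    · have hcov : f x ∈ nbhd T (DB \ {x}) := hT''.symm ▸ Set.mem_univ (f x)
      obtain ⟨v, ⟨hvD, hvx⟩, hadj⟩ := hcov
      have hv : v ∈ T.neighborSet (f x) := hadj.symm
      rw [hfN x hxS, Set.mem_singleton_iff] at hv
      exact hvx hv
    · have hcov : s ∈ nbhd T (DB \ {f s}) := hT''.symm ▸ Set.mem_univ s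
      obtain ⟨v, ⟨hvD, hvx⟩, hadj⟩ := hcov
      rcases hvD with (hvS | ⟨t, htS', rfl⟩) | hvc
      · exact hbal v s hadj (by rw [hvS, hsS'.1])
      · have hv : s ∈ T.neighborSet (f t) := hadj
        rw [hfN t htS'.1, Set.mem_singleton_iff] at hv
        exact hvx (by rw [hv]; rfl)
      · rw [Set.mem_singleton_iff] at hvc
        exact hsS'.2 (hvc ▸ hadj)
    · rw [Set.mem_singleton_iff] at hxc
      subst hxc
      have hcov : s1 ∈ nbhd T (DB \ {x}) := hT''.symm ▸ Set.mem_univ s1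
      obtain ⟨v, ⟨hvD, hvx⟩, hadj⟩ := hcov
      rcases hvD with (hvS | ⟨t, htS', rfl⟩) | hvc
      · exact hbal v s1 hadj (by rw [hvS, hh1])
      · have hv : s1 ∈ T.neighborSet (f t) := hadj
        rw [hfN t htS'.1, Set.mem_singleton_iff] at hv
        exact htS'.2 (hv ▸ hcs1)
      · exact hvx hvc
  -- cardinalities
  have hcnotS : heightV T c ≠ 1 := by omega
  have hdisjA : Disjoint S (f '' S) := by
    rw [Set.disjoint_left]
    rintro a haS ⟨s, hsS, rfl⟩
    have h0 := hfht s hsS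
    have h1 : heightV T (f s) = 1 := haS
    omega
  have hcardA : DA.ncard = S.ncard + S.ncard := by
    rw [hDAdef, Set.ncard_union_eq hdisjA (Set.toFinite _) (Set.toFinite _),
      Set.ncard_image_of_injOn hfinj]
  have hS'S : S' ⊆ S := fun a ha => ha.1
  have hdisjB1 : Disjoint S (f '' S') := by
    rw [Set.disjoint_left]
    rintro a haS ⟨s, hsS', rfl⟩
    have h0 := hfht s hsS'.1
    have h1 : heightV T (f s) = 1 := haS
    omega
  have hdisjB2 : Disjoint (S ∪ f '' S') ({c} : Set V) := by
    rw [Set.disjoint_right]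
    rintro a rfl
    rintro (haS | ⟨s, hsS', he⟩)
    · exact hcnotS haS
    · have h0 := hfht s hsS'.1
      rw [he] at h0
      omega
  have hcardB : DB.ncard = S.ncard + S'.ncard + 1 := by
    rw [hDBdef, Set.ncard_union_eq hdisjB2 (Set.toFinite _) (Set.toFinite _),
      Set.ncard_union_eq hdisjB1 (Set.toFinite _) (Set.toFinite _),
      Set.ncard_image_of_injOn (hfinj.mono hS'S), Set.ncard_singleton]
  have hS'small : S'.ncard + 2 ≤ S.ncard := by
    have hsub : S' ∪ {s1, s2} ⊆ S := by
      rintro a (ha | ha)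
      · exact hS'S ha
      · rcases ha with rfl | ha
        · exact hs1S
        · rw [Set.mem_singleton_iff] at ha
          exact ha ▸ hs2S
    have hdisj : Disjoint S' ({s1, s2} : Set V) := by
      rw [Set.disjoint_right]
      rintro a (rfl | ha)
      · exact fun h => h.2 hcs1
      · rw [Set.mem_singleton_iff] at ha
        exact ha ▸ fun h => h.2 hcs2
    have := Set.ncard_le_ncard hsub (Set.toFinite _)
    rw [Set.ncard_union_eq hdisj (Set.toFinite _) (Set.toFinite _),
      Set.ncard_pair hs12] at this
    omega
  intro hw
  have := hw DA DB hminA hminB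
  omega
end

section
/- Let T be a well-totally dominated balanced tree of height 3 and let T' be the subgraph of T induced by the vertices of height 2 and height 3. Then T' is connected (hence a tree). -/
open SimpleGraph Set

set_option linter.unusedSectionVars false
set_option linter.unusedVariables false

namespace Stmt18Aux

variable {V : Type*} [Fintype V] {T : SimpleGraph V}

lemma nbhd_mono {D D' : Set V} (h : D ⊆ D') : nbhd T D ⊆ nbhd T D' := by
  rintro u ⟨v, hv, ha⟩; exact ⟨v, h hv, ha⟩

lemma heightV_le {v ℓ : V} (hl : IsLeaf T ℓ) : heightV T v ≤ T.dist v ℓ :=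
  Nat.sInf_le ⟨ℓ, hl, rfl⟩

lemma exists_leaf_heightV (hleaf : ∃ ℓ, IsLeaf T ℓ) (v : V) :
    ∃ ℓ, IsLeaf T ℓ ∧ T.dist v ℓ = heightV T v := by
  obtain ⟨ℓ, hl⟩ := hleaf
  exact Nat.sInf_mem (⟨T.dist v ℓ, ℓ, hl, rfl⟩ :
    {d | ∃ ℓ, IsLeaf T ℓ ∧ T.dist v ℓ = d}.Nonempty)

lemma heightV_leaf {ℓ : V} (hl : IsLeaf T ℓ) : heightV T ℓ = 0 := by
  have := heightV_le (v := ℓ) hl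
  simp only [SimpleGraph.dist_self] at this
  omega

lemma leaf_neighborSet {ℓ s : V} (hl : IsLeaf T ℓ) (hs : T.Adj ℓ s) :
    T.neighborSet ℓ = {s} := by
  obtain ⟨a, ha⟩ := Set.ncard_eq_one.mp hl
  have : s ∈ T.neighborSet ℓ := hs
  rw [ha] at this ⊢
  simp only [Set.mem_singleton_iff] at this
  rw [this]

lemma leaf_adj_eq {ℓ s t : V} (hl : IsLeaf T ℓ) (hs : T.Adj ℓ s) (ht : T.Adj ℓ t) : t = s := by
  have := leaf_neighborSet hl hs
  have h2 : t ∈ T.neighborSet ℓ := ht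
  rw [this] at h2; exact h2

lemma heightV_adj_le (hc : T.Connected) (hleaf : ∃ ℓ, IsLeaf T ℓ) {u v : V}
    (h : T.Adj u v) : heightV T u ≤ heightV T v + 1 := by
  obtain ⟨ℓ, hl, hd⟩ := exists_leaf_heightV hleaf v
  have h1 : heightV T u ≤ T.dist u ℓ := heightV_le hl
  have tri : T.dist u ℓ ≤ T.dist u v + T.dist v ℓ := hc.dist_triangle
  have duv : T.dist u v ≤ 1 := by
    have := SimpleGraph.dist_le (Walk.cons h Walk.nil)
    simpa using this
  omega

lemma heightV_adj (hc : T.Connected) (hleaf : ∃ ℓ, IsLeaf T ℓ) (hbal : IsBalanced T)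
    {u v : V} (h : T.Adj u v) :
    heightV T u = heightV T v + 1 ∨ heightV T v = heightV T u + 1 := by
  have h1 := heightV_adj_le hc hleaf h
  have h2 := heightV_adj_le hc hleaf h.symm
  have h3 := hbal u v h
  omega

lemma isLeaf_of_height0 (hc : T.Connected) (hleaf : ∃ ℓ, IsLeaf T ℓ) {v : V}
    (h : heightV T v = 0) : IsLeaf T v := by
  obtain ⟨ℓ, hl, hd⟩ := exists_leaf_heightV hleaf v
  rw [h] at hd
  have : v = ℓ := (hc.dist_eq_zero_iff).mp hd
  rwa [this]

lemma exists_desc (hc : T.Connected) (hleaf : ∃ ℓ, IsLeaf T ℓ) (hbal : IsBalanced T) {v : V} {n : ℕ}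
    (h : heightV T v = n + 1) : ∃ w, T.Adj v w ∧ heightV T w = n := by
  obtain ⟨ℓ, hl, hd⟩ := exists_leaf_heightV hleaf v
  rw [h] at hd
  obtain ⟨p, hp⟩ := (hc.preconnected v ℓ).exists_walk_length_eq_dist
  rw [hd] at hp
  cases p with
  | nil => simp at hp
  | cons hadj q =>
    rename_i w
    refine ⟨w, hadj, ?_⟩
    have hq : T.dist w ℓ ≤ n := by
      have := SimpleGraph.dist_le q
      simp only [Walk.length_cons] at hp
      omega
    have h1 : heightV T w ≤ n := le_trans (heightV_le hl) hq
    have h2 := heightV_adj_le hc hleaf hadj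
    rw [h] at h2
    omega

section Global

variable (hh : heightG T = 3)
include hh

lemma height_le_three (v : V) : heightV T v ≤ 3 := by
  have hbdd : BddAbove {d | ∃ v, heightV T v = d} := by
    have : {d | ∃ v, heightV T v = d} = Set.range (heightV T) := rfl
    rw [this]; exact (Set.finite_range _).bddAbove
  have := le_csSup hbdd (⟨v, rfl⟩ : heightV T v ∈ {d | ∃ v, heightV T v = d})
  rwa [show sSup {d | ∃ v, heightV T v = d} = 3 from hh] at this

lemma exists_height3 : ∃ v, heightV T v = 3 := by
  rcases Set.eq_empty_or_nonempty {d | ∃ v, heightV T v = d} with he | hne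
  · exfalso
    have : heightG T = 0 := by rw [heightG, he]; simp
    omega
  · have hbdd : BddAbove {d | ∃ v, heightV T v = d} := by
      have : {d | ∃ v, heightV T v = d} = Set.range (heightV T) := rfl
      rw [this]; exact (Set.finite_range _).bddAbove
    have := Nat.sSup_mem hne hbdd
    rwa [show sSup {d | ∃ v, heightV T v = d} = 3 from hh] at this

lemma exists_leaf : ∃ ℓ, IsLeaf T ℓ := by
  obtain ⟨v, hv⟩ := exists_height3 hh
  by_contra hno
  push_neg at hno
  have : {d | ∃ ℓ, IsLeaf T ℓ ∧ T.dist v ℓ = d} = ∅ := by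
    ext d; simp only [Set.mem_setOf_eq, Set.mem_empty_iff_false, iff_false]
    rintro ⟨ℓ, hl, _⟩; exact hno ℓ hl
  have h0 : heightV T v = 0 := by rw [heightV, this]; simp
  omega

end Global


/-! ### Tree lemmas -/

lemma not_isLeaf_of_height {v : V} (hc : T.Connected) (hleaf : ∃ ℓ, IsLeaf T ℓ)
    {n : ℕ} (hn : heightV T v = n) (hn0 : n ≠ 0) : ¬ IsLeaf T v := fun hl => by
  rw [heightV_leaf hl] at hn; omega

lemma exists_second_nbr {v z : V} (hadj : T.Adj v z) (hnl : ¬ IsLeaf T v) :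
    ∃ u, T.Adj v u ∧ u ≠ z := by
  by_contra hno
  push_neg at hno
  have hsub : T.neighborSet v ⊆ {z} := fun u hu => hno u hu
  have h1 : (T.neighborSet v).ncard ≤ 1 := by
    have := Set.ncard_le_ncard hsub (Set.finite_singleton z)
    simpa using this
  have h2 : z ∈ T.neighborSet v := hadj
  have h3 : 1 ≤ (T.neighborSet v).ncard := by
    have : 0 < (T.neighborSet v).ncard := (Set.ncard_pos (Set.toFinite _)).mpr ⟨z, h2⟩
    omega
  exact hnl (le_antisymm h1 h3)

lemma exists_two_nbrs {v z : V} (hadj : T.Adj v z) (hnl : ¬ IsLeaf T v) :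
    ∃ u w, T.Adj v u ∧ T.Adj v w ∧ u ≠ w := by
  obtain ⟨u, hu, hne⟩ := exists_second_nbr hadj hnl
  exact ⟨u, z, hu, hadj, hne⟩

/-- Two distinct common neighbors of two distinct vertices contradict acyclicity. -/
lemma two_common (ht : T.IsTree) {b u w w' : V} (hbu : b ≠ u) (hww : w ≠ w')
    (h1 : T.Adj w b) (h2 : T.Adj w u) (h3 : T.Adj w' b) (h4 : T.Adj w' u) : False := by
  have hp1 : (Walk.cons h1.symm (Walk.cons h2 Walk.nil)).IsPath := by
    simp [Walk.cons_isPath_iff, h1.ne', hbu, h2.ne]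
  have hp2 : (Walk.cons h3.symm (Walk.cons h4 Walk.nil)).IsPath := by
    simp [Walk.cons_isPath_iff, h3.ne', hbu, h4.ne]
  have := ht.IsAcyclic.path_unique ⟨_, hp1⟩ ⟨_, hp2⟩
  have hsup := congrArg (fun p : T.Path b u => (p : T.Walk b u).support) this
  simp only [Walk.support_cons, Walk.support_nil] at hsup
  simp only [List.cons.injEq] at hsup
  exact hww hsup.2.1

/-- The graph `T` with vertex `c` removed (as an edge-deleted graph on the same vertex set). -/
def delV (T : SimpleGraph V) (c : V) : SimpleGraph V where
  Adj u v := T.Adj u v ∧ u ≠ c ∧ v ≠ c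
  symm := ⟨fun _ _ h => ⟨h.1.symm, h.2.2, h.2.1⟩⟩
  loopless := ⟨fun v h => T.loopless.irrefl v h.1⟩

lemma delV_le {c : V} : delV T c ≤ T := fun _ _ h => h.1

lemma delV_support {c u v : V} (p : (delV T c).Walk u v) (hu : u ≠ c) : c ∉ p.support := by
  induction p with
  | nil => simpa using hu.symm
  | cons h q ih =>
    simp only [Walk.support_cons, List.mem_cons]
    push_neg
    exact ⟨hu.symm, ih h.2.2⟩

/-- Branch of `x` at center `c`. -/
def Br (T : SimpleGraph V) (c x v : V) : Prop := (delV T c).Reachable x v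

lemma br_refl {c x : V} : Br T c x x := Reachable.refl x

lemma br_extend {c x v w : V} (h : Br T c x v) (hadj : T.Adj v w) (hw : w ≠ c) (hv : v ≠ c) :
    Br T c x w := h.trans (SimpleGraph.Adj.reachable ⟨hadj, hv, hw⟩)

lemma br_ne_center {c x v : V} (hx : x ≠ c) (h : Br T c x v) : v ≠ c := by
  intro hvc
  subst hvc
  obtain ⟨p⟩ := h
  exact delV_support p hx (Walk.end_mem_support p)

/-- Two distinct neighbors of `c` cannot be connected avoiding `c`. -/
lemma branch_sep (ht : T.IsTree) {c x y : V} (hx : T.Adj c x) (hy : T.Adj c y) (hxy : x ≠ y)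
    (h : Br T c x y) : False := by
  classical
  obtain ⟨p⟩ := h
  have hxc : x ≠ c := hx.ne'
  have hcns : c ∉ p.support := delV_support p hxc
  set q := (p.mapLe (delV_le)).bypass with hq
  have hqp : q.IsPath := Walk.bypass_isPath _
  have hcq : c ∉ q.support := fun hmem => by
    have h1 := Walk.support_bypass_subset _ hmem
    rw [Walk.support_map] at h1
    simp only [List.mem_map] at h1
    obtain ⟨w, hw, hwc⟩ := h1
    have : w = c := hwc
    exact hcns (this ▸ hw)
  have hp2 : (Walk.cons hx.symm (Walk.cons hy Walk.nil)).IsPath := by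
    simp [Walk.cons_isPath_iff, hx.ne', hxy, hy.ne]
  have := ht.IsAcyclic.path_unique ⟨q, hqp⟩ ⟨_, hp2⟩
  apply hcq
  have : q = Walk.cons hx.symm (Walk.cons hy Walk.nil) := congrArg Subtype.val this
  rw [this]
  simp

lemma br_center_adj_eq (ht : T.IsTree) {c x v : V} (hx : T.Adj c x) (h : Br T c x v)
    (hv : T.Adj c v) : v = x := by
  by_contra hne
  exact branch_sep ht hx hv (fun he => hne he.symm) h

lemma br_disjoint (ht : T.IsTree) {c x y v : V} (hx : T.Adj c x) (hy : T.Adj c y) (hxy : x ≠ y)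
    (h1 : Br T c x v) (h2 : Br T c y v) : False :=
  branch_sep ht hx hy hxy (h1.trans h2.symm)

/-- Pruning a cover to a minimal one. -/
lemma exists_min_subcover (Tg C : Set V) (hcov : ∀ t ∈ Tg, ∃ c ∈ C, T.Adj c t) :
    ∃ Y ⊆ C, (∀ t ∈ Tg, ∃ c ∈ Y, T.Adj c t) ∧
      ∀ y ∈ Y, ∃ t ∈ Tg, T.Adj y t ∧ ∀ y' ∈ Y, T.Adj y' t → y' = y := by
  generalize hn : C.ncard = n
  induction n using Nat.strong_induction_on generalizing C with
  | _ n ih =>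
    by_cases hall : ∀ y ∈ C, ∃ t ∈ Tg, T.Adj y t ∧ ∀ y' ∈ C, T.Adj y' t → y' = y
    · exact ⟨C, le_refl _, hcov, hall⟩
    · push_neg at hall
      obtain ⟨y, hy, hrem⟩ := hall
      have hcov' : ∀ t ∈ Tg, ∃ c ∈ C \ {y}, T.Adj c t := by
        intro t htg
        obtain ⟨c, hc, hadj⟩ := hcov t htg
        by_cases hcy : c = y
        · subst hcy
          obtain ⟨y', hy', hadj', hne⟩ := hrem t htg hadj
          exact ⟨y', ⟨hy', hne⟩, hadj'⟩
        · exact ⟨c, ⟨hc, hcy⟩, hadj⟩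
      have hlt : (C \ {y}).ncard < n := by
        rw [← hn]
        exact Set.ncard_diff_singleton_lt_of_mem hy (Set.toFinite _)
      obtain ⟨Y, hY1, hY2, hY3⟩ := ih _ hlt (C \ {y}) hcov' rfl
      exact ⟨Y, hY1.trans Set.diff_subset, hY2, hY3⟩


/-! ### Height facts for adjacent vertices -/

section HeightFacts

variable (ht : T.IsTree) (hbal : IsBalanced T) (hh : heightG T = 3)
include ht hbal hh

lemma g_adj1 {d t : V} (h : T.Adj d t) (h1 : heightV T t = 1) :
    heightV T d = 0 ∨ heightV T d = 2 := by
  have := heightV_adj ht.isConnected (exists_leaf hh) hbal h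
  omega

lemma g_adj3 {d t : V} (h : T.Adj d t) (h3 : heightV T t = 3) : heightV T d = 2 := by
  have := heightV_adj ht.isConnected (exists_leaf hh) hbal h
  have := height_le_three hh d
  omega

lemma g_adj0 {d t : V} (h : T.Adj d t) (h0 : heightV T t = 0) : heightV T d = 1 := by
  have := heightV_adj ht.isConnected (exists_leaf hh) hbal h
  omega

lemma g_adj2 {d t : V} (h : T.Adj d t) (h2 : heightV T t = 2) :
    heightV T d = 1 ∨ heightV T d = 3 := by
  have := heightV_adj ht.isConnected (exists_leaf hh) hbal h
  omega

/-- No vertex next to a target (height 1 or 3) has height 1. -/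
lemma g_adj13 {d t : V} (h : T.Adj d t) (h13 : heightV T t = 1 ∨ heightV T t = 3) :
    heightV T d = 0 ∨ heightV T d = 2 := by
  rcases h13 with h1 | h3
  · exact g_adj1 ht hbal hh h h1
  · exact Or.inr (g_adj3 ht hbal hh h h3)

end HeightFacts

lemma hne_of_height {u v : V} {m n : ℕ} (h1 : heightV T u = m) (h2 : heightV T v = n)
    (hmn : m ≠ n) : u ≠ v := fun he => hmn (by rw [← h1, ← h2, he])

/-! ### The part constructions -/

/-- A good part covering everything outside the branches of `a`, `a'`. -/
def GOK (T : SimpleGraph V) (c a a' : V) (G : Set V) : Prop :=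
  (∀ w ∈ G, (heightV T w = 0 ∨ heightV T w = 2) ∧ ¬T.Adj w c ∧ ¬Br T c a w ∧ ¬Br T c a' w) ∧
  (∀ t, t ≠ c → ¬Br T c a t → ¬Br T c a' t → (heightV T t = 1 ∨ heightV T t = 3) →
    ∃ w ∈ G, T.Adj w t) ∧
  (∀ w ∈ G, ∃ t, t ≠ c ∧ ¬Br T c a t ∧ ¬Br T c a' t ∧ (heightV T t = 1 ∨ heightV T t = 3) ∧
    ∀ d ∈ G, T.Adj d t → d = w)

/-- A good "branch part" of a total dominating set. -/
def PartOK (T : SimpleGraph V) (c x : V) (W : Set V) : Prop :=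
  (∀ w ∈ W, Br T c x w ∧ (heightV T w = 0 ∨ heightV T w = 2)) ∧
  (∀ t, Br T c x t → (heightV T t = 1 ∨ heightV T t = 3) → ∃ w ∈ W, T.Adj w t) ∧
  (∀ w ∈ W, ∃ t, Br T c x t ∧ (heightV T t = 1 ∨ heightV T t = 3) ∧
      ∀ d ∈ W, T.Adj d t → d = w)

lemma min_of_priv' {D : Set V} (hTDS : IsTDS T D)
    (hpriv : ∀ d ∈ D, ∃ t, ∀ e ∈ D, T.Adj e t → e = d) : IsMinTDS T D := by
  refine ⟨hTDS, fun D' hsub hTDS' => ?_⟩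
  obtain ⟨d, hdD, hdD'⟩ := Set.exists_of_ssubset hsub
  obtain ⟨t, hpt⟩ := hpriv d hdD
  have ht' : t ∈ nbhd T D' := by rw [hTDS']; trivial
  obtain ⟨e, heD', headj⟩ := ht'
  exact hdD' ((hpt e (hsub.1 heD') headj) ▸ heD')

section Parts

variable (ht : T.IsTree) (hbal : IsBalanced T) (hh : heightG T = 3)
  (ℓf : V → V) (hℓf : ∀ s, heightV T s = 1 → IsLeaf T (ℓf s) ∧ T.Adj s (ℓf s))
include ht hbal hh hℓf

lemma partM {c x : V} (hc1 : heightV T c = 1) (hadj : T.Adj c x) (hx2 : heightV T x = 2) :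
    ∃ W, PartOK T c x W ∧ x ∉ W := by
  have hc := ht.isConnected
  have hleaf := exists_leaf hh
  set Tg := {t | Br T c x t ∧ heightV T t = 3} with hTg
  set C := {w | Br T c x w ∧ heightV T w = 2 ∧ w ≠ x} with hC
  have hcov : ∀ t ∈ Tg, ∃ w ∈ C, T.Adj w t := by
    rintro t ⟨hbr, ht3⟩
    have hnl : ¬IsLeaf T t := not_isLeaf_of_height hc hleaf ht3 (by omega)
    have htc : t ≠ c := hne_of_height ht3 hc1 (by omega)
    have hget : ∃ w, T.Adj t w ∧ w ≠ x := by
      rcases Classical.em (T.Adj t x) with hxt | hxt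
      · exact exists_second_nbr hxt hnl
      · obtain ⟨w0, hw0, _⟩ := exists_desc hc hleaf hbal (show heightV T t = 2 + 1 from ht3)
        exact ⟨w0, hw0, fun he => hxt (he ▸ hw0)⟩
    obtain ⟨w, hw, hwx⟩ := hget
    have hw2 : heightV T w = 2 := g_adj3 ht hbal hh hw.symm ht3
    have hwc : w ≠ c := hne_of_height hw2 hc1 (by omega)
    exact ⟨w, ⟨br_extend hbr hw hwc htc, hw2, hwx⟩, hw.symm⟩
  obtain ⟨Y, hYC, hYcov, hYpriv⟩ := exists_min_subcover Tg C hcov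
  set SS := {s | Br T c x s ∧ heightV T s = 1 ∧ ¬∃ y ∈ Y, T.Adj y s} with hSS
  refine ⟨Y ∪ ℓf '' SS, ⟨?_, ?_, ?_⟩, ?_⟩
  · rintro w (hw | ⟨s, hs, rfl⟩)
    · obtain ⟨hbr, h2, _⟩ := hYC hw
      exact ⟨hbr, Or.inr h2⟩
    · obtain ⟨hbr, hs1, _⟩ := hs
      obtain ⟨hl, hadj'⟩ := hℓf s hs1
      have h0 : heightV T (ℓf s) = 0 := heightV_leaf hl
      exact ⟨br_extend hbr hadj' (hne_of_height h0 hc1 (by omega))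
        (br_ne_center hadj.ne' hbr), Or.inl h0⟩
  · intro t hbr h13
    rcases h13 with h1 | h3
    · rcases Classical.em (∃ y ∈ Y, T.Adj y t) with ⟨y, hy, hadj'⟩ | hno
      · exact ⟨y, Or.inl hy, hadj'⟩
      · exact ⟨ℓf t, Or.inr ⟨t, ⟨hbr, h1, hno⟩, rfl⟩, (hℓf t h1).2.symm⟩
    · obtain ⟨y, hy, hadj'⟩ := hYcov t ⟨hbr, h3⟩
      exact ⟨y, Or.inl hy, hadj'⟩
  · rintro w (hw | ⟨s, hs, rfl⟩)
    · obtain ⟨t, ⟨hbr, ht3⟩, hadj', hpriv⟩ := hYpriv w hw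
      refine ⟨t, hbr, Or.inr ht3, ?_⟩
      rintro d (hd | ⟨s', hs', rfl⟩) hdt
      · exact hpriv d hd hdt
      · exfalso
        have h0 : heightV T (ℓf s') = 0 := heightV_leaf (hℓf s' hs'.2.1).1
        have := g_adj3 ht hbal hh hdt ht3
        omega
    · obtain ⟨hbr, hs1, hno⟩ := hs
      refine ⟨s, hbr, Or.inl hs1, ?_⟩
      rintro d (hd | ⟨s', hs', rfl⟩) hdt
      · exact absurd ⟨d, hd, hdt⟩ hno
      · have : s = s' := leaf_adj_eq (hℓf s' hs'.2.1).1 (hℓf s' hs'.2.1).2.symm hdt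
        rw [this]
  · rintro (hx | ⟨s, hs, he⟩)
    · exact (hYC hx).2.2 rfl
    · have h0 : heightV T (ℓf s) = 0 := heightV_leaf (hℓf s hs.2.1).1
      rw [he] at h0
      omega


lemma partP {c x : V} (hc1 : heightV T c = 1) (hadj : T.Adj c x) (hx2 : heightV T x = 2) :
    ∃ W, PartOK T c x W ∧ x ∈ W := by
  have hc := ht.isConnected
  have hleaf := exists_leaf hh
  have hxc : x ≠ c := hadj.ne'
  have hnlx : ¬IsLeaf T x := not_isLeaf_of_height hc hleaf hx2 (by omega)
  obtain ⟨u, hxu, huc⟩ := exists_second_nbr hadj.symm hnlx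
  have hu13 : heightV T u = 1 ∨ heightV T u = 3 := g_adj2 ht hbal hh hxu.symm hx2
  have hbru : Br T c x u := br_extend br_refl hxu huc hxc
  set Tg := {t | Br T c x t ∧ heightV T t = 3 ∧ ¬T.Adj x t} with hTg
  set C := {w | Br T c x w ∧ heightV T w = 2 ∧ w ≠ x ∧ ¬T.Adj w u} with hC
  have hcov : ∀ t ∈ Tg, ∃ w ∈ C, T.Adj w t := by
    rintro t ⟨hbr, ht3, htnx⟩
    have hnl : ¬IsLeaf T t := not_isLeaf_of_height hc hleaf ht3 (by omega)
    have htc : t ≠ c := hne_of_height ht3 hc1 (by omega)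
    have htu : t ≠ u := fun he => htnx (he ▸ hxu)
    have hget : ∃ w, T.Adj t w ∧ ¬T.Adj w u ∧ w ≠ x := by
      by_contra hno
      push_neg at hno
      have hall : ∀ w, T.Adj t w → T.Adj w u := by
        intro w hw
        by_contra hnadj
        exact htnx ((hno w hw hnadj) ▸ hw.symm)
      obtain ⟨w0, hw0, _⟩ := exists_desc hc hleaf hbal (show heightV T t = 2 + 1 from ht3)
      obtain ⟨w, w', hw, hw', hww⟩ := exists_two_nbrs hw0 hnl
      exact two_common ht htu hww hw.symm (hall w hw) hw'.symm (hall w' hw')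
    obtain ⟨w, hw, hwnu, hwx⟩ := hget
    have hw2 : heightV T w = 2 := g_adj3 ht hbal hh hw.symm ht3
    have hwc : w ≠ c := hne_of_height hw2 hc1 (by omega)
    exact ⟨w, ⟨br_extend hbr hw hwc htc, hw2, hwx, hwnu⟩, hw.symm⟩
  obtain ⟨Y, hYC, hYcov, hYpriv⟩ := exists_min_subcover Tg C hcov
  set SS := {s | Br T c x s ∧ heightV T s = 1 ∧ ¬T.Adj x s ∧ ¬∃ y ∈ Y, T.Adj y s} with hSS
  refine ⟨{x} ∪ Y ∪ ℓf '' SS, ⟨?_, ?_, ?_⟩, Or.inl (Or.inl rfl)⟩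
  · rintro w ((rfl | hw) | ⟨s, hs, rfl⟩)
    · exact ⟨br_refl, Or.inr hx2⟩
    · obtain ⟨hbr, h2, _⟩ := hYC hw
      exact ⟨hbr, Or.inr h2⟩
    · obtain ⟨hbr, hs1, _, _⟩ := hs
      obtain ⟨hl, hadj'⟩ := hℓf s hs1
      have h0 : heightV T (ℓf s) = 0 := heightV_leaf hl
      exact ⟨br_extend hbr hadj' (hne_of_height h0 hc1 (by omega))
        (br_ne_center hxc hbr), Or.inl h0⟩
  · intro t hbr h13
    rcases Classical.em (T.Adj x t) with hxt | hxt
    · exact ⟨x, Or.inl (Or.inl rfl), hxt⟩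
    rcases h13 with h1 | h3
    · rcases Classical.em (∃ y ∈ Y, T.Adj y t) with ⟨y, hy, hadj'⟩ | hno
      · exact ⟨y, Or.inl (Or.inr hy), hadj'⟩
      · exact ⟨ℓf t, Or.inr ⟨t, ⟨hbr, h1, hxt, hno⟩, rfl⟩, (hℓf t h1).2.symm⟩
    · obtain ⟨y, hy, hadj'⟩ := hYcov t ⟨hbr, h3, hxt⟩
      exact ⟨y, Or.inl (Or.inr hy), hadj'⟩
  · rintro w ((rfl | hw) | ⟨s, hs, rfl⟩)
    · refine ⟨u, hbru, hu13, ?_⟩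
      rintro d ((rfl | hd) | ⟨s', hs', rfl⟩) hdu
      · rfl
      · exact absurd hdu (hYC hd).2.2.2
      · exfalso
        have : u = s' := leaf_adj_eq (hℓf s' hs'.2.1).1 (hℓf s' hs'.2.1).2.symm hdu
        exact hs'.2.2.1 (this ▸ hxu)
    · obtain ⟨t, ⟨hbr, ht3, htnx⟩, hadj', hpriv⟩ := hYpriv w hw
      refine ⟨t, hbr, Or.inr ht3, ?_⟩
      rintro d ((rfl | hd) | ⟨s', hs', rfl⟩) hdt
      · exact absurd hdt htnx
      · exact hpriv d hd hdt
      · exfalso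
        have h0 : heightV T (ℓf s') = 0 := heightV_leaf (hℓf s' hs'.2.1).1
        have := g_adj3 ht hbal hh hdt ht3
        omega
    · obtain ⟨hbr, hs1, hsnx, hno⟩ := hs
      refine ⟨s, hbr, Or.inl hs1, ?_⟩
      rintro d ((rfl | hd) | ⟨s', hs', rfl⟩) hdt
      · exact absurd hdt hsnx
      · exact absurd ⟨d, hd, hdt⟩ hno
      · have : s = s' := leaf_adj_eq (hℓf s' hs'.2.1).1 (hℓf s' hs'.2.1).2.symm hdt
        rw [this]


lemma partG {c a a' : V} (hc1 : heightV T c = 1) (ha : T.Adj c a) (ha2 : heightV T a = 2)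
    (ha' : T.Adj c a') (ha'2 : heightV T a' = 2) : ∃ G, GOK T c a a' G := by
  have hc := ht.isConnected
  have hleaf := exists_leaf hh
  set Tg := {t | t ≠ c ∧ ¬Br T c a t ∧ ¬Br T c a' t ∧ heightV T t = 3} with hTg
  set C := {w | heightV T w = 2 ∧ ¬T.Adj w c ∧ ¬Br T c a w ∧ ¬Br T c a' w} with hC
  have hcov : ∀ t ∈ Tg, ∃ w ∈ C, T.Adj w t := by
    rintro t ⟨htc, hba, hba', ht3⟩
    have hnl : ¬IsLeaf T t := not_isLeaf_of_height hc hleaf ht3 (by omega)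
    have hget : ∃ w, T.Adj t w ∧ ¬T.Adj w c := by
      by_contra hno
      push_neg at hno
      obtain ⟨w0, hw0, _⟩ := exists_desc hc hleaf hbal (show heightV T t = 2 + 1 from ht3)
      obtain ⟨w, w', hw, hw', hww⟩ := exists_two_nbrs hw0 hnl
      exact two_common ht htc hww hw.symm (hno w hw) hw'.symm (hno w' hw')
    obtain ⟨w, hw, hwnc⟩ := hget
    have hw2 : heightV T w = 2 := g_adj3 ht hbal hh hw.symm ht3
    have hwc : w ≠ c := hne_of_height hw2 hc1 (by omega)
    have hwa : ¬Br T c a w := fun hbr => hba (br_extend hbr hw.symm htc hwc)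
    have hwa' : ¬Br T c a' w := fun hbr => hba' (br_extend hbr hw.symm htc hwc)
    exact ⟨w, ⟨hw2, hwnc, hwa, hwa'⟩, hw.symm⟩
  obtain ⟨Y, hYC, hYcov, hYpriv⟩ := exists_min_subcover Tg C hcov
  set SS := {s | s ≠ c ∧ ¬Br T c a s ∧ ¬Br T c a' s ∧ heightV T s = 1 ∧
    ¬∃ y ∈ Y, T.Adj y s} with hSS
  refine ⟨Y ∪ ℓf '' SS, ?_, ?_, ?_⟩
  · rintro w (hw | ⟨s, hs, rfl⟩)
    · obtain ⟨h2, hnc, hba, hba'⟩ := hYC hw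
      exact ⟨Or.inr h2, hnc, hba, hba'⟩
    · obtain ⟨hsc, hba, hba', hs1, _⟩ := hs
      obtain ⟨hl, hadj'⟩ := hℓf s hs1
      have h0 : heightV T (ℓf s) = 0 := heightV_leaf hl
      have hlc : ℓf s ≠ c := hne_of_height h0 hc1 (by omega)
      refine ⟨Or.inl h0, ?_, ?_, ?_⟩
      · intro hadjc
        exact hsc (leaf_adj_eq hl hadj'.symm hadjc).symm
      · exact fun hbr => hba (br_extend hbr hadj'.symm hsc hlc)
      · exact fun hbr => hba' (br_extend hbr hadj'.symm hsc hlc)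
  · intro t htc hba hba' h13
    rcases h13 with h1 | h3
    · rcases Classical.em (∃ y ∈ Y, T.Adj y t) with ⟨y, hy, hadj'⟩ | hno
      · exact ⟨y, Or.inl hy, hadj'⟩
      · exact ⟨ℓf t, Or.inr ⟨t, ⟨htc, hba, hba', h1, hno⟩, rfl⟩, (hℓf t h1).2.symm⟩
    · obtain ⟨y, hy, hadj'⟩ := hYcov t ⟨htc, hba, hba', h3⟩
      exact ⟨y, Or.inl hy, hadj'⟩
  · rintro w (hw | ⟨s, hs, rfl⟩)
    · obtain ⟨t, ⟨htc, hba, hba', ht3⟩, hadj', hpriv⟩ := hYpriv w hw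
      refine ⟨t, htc, hba, hba', Or.inr ht3, ?_⟩
      rintro d (hd | ⟨s', hs', rfl⟩) hdt
      · exact hpriv d hd hdt
      · exfalso
        have h0 : heightV T (ℓf s') = 0 := heightV_leaf (hℓf s' hs'.2.2.2.1).1
        have := g_adj3 ht hbal hh hdt ht3
        omega
    · obtain ⟨hsc, hba, hba', hs1, hno⟩ := hs
      refine ⟨s, hsc, hba, hba', Or.inl hs1, ?_⟩
      rintro d (hd | ⟨s', hs', rfl⟩) hdt
      · exact absurd ⟨d, hd, hdt⟩ hno
      · have : s = s' := leaf_adj_eq (hℓf s' hs'.2.2.2.1).1 (hℓf s' hs'.2.2.2.1).2.symm hdt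
        rw [this]


lemma assemble {c a a' : V} (hc1 : heightV T c = 1) (hca : T.Adj c a)
    (ha2 : heightV T a = 2) (hca' : T.Adj c a') (ha'2 : heightV T a' = 2) (hne : a ≠ a')
    {G Wa Wa' E : Set V} (hG : GOK T c a a' G) (hWa : PartOK T c a Wa)
    (hWa' : PartOK T c a' Wa')
    (hE : (E = {ℓf c} ∧ a ∉ Wa ∧ a' ∉ Wa') ∨ (E = ∅ ∧ (a ∈ Wa ∨ a' ∈ Wa'))) :
    IsMinTDS T ({v | heightV T v = 1} ∪ G ∪ Wa ∪ Wa' ∪ E) := by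
  have hc := ht.isConnected
  have hleaf := exists_leaf hh
  have hlc : IsLeaf T (ℓf c) := (hℓf c hc1).1
  have hadjc : T.Adj c (ℓf c) := (hℓf c hc1).2
  set S := {v | heightV T v = 1} with hS
  set D := S ∪ G ∪ Wa ∪ Wa' ∪ E with hD
  have hSh : ∀ e ∈ S, heightV T e = 1 := fun e he => he
  have hGh : ∀ e ∈ G, heightV T e = 0 ∨ heightV T e = 2 := fun e he => (hG.1 e he).1
  have hWah : ∀ e ∈ Wa, heightV T e = 0 ∨ heightV T e = 2 := fun e he => (hWa.1 e he).2
  have hWa'h : ∀ e ∈ Wa', heightV T e = 0 ∨ heightV T e = 2 := fun e he => (hWa'.1 e he).2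
  have hEh : ∀ e ∈ E, e = ℓf c := by
    rcases hE with ⟨hE1, _⟩ | ⟨hE1, _⟩
    · intro e he; rw [hE1] at he; exact he
    · intro e he; rw [hE1] at he; exact absurd he (Set.notMem_empty e)
  have hTDS : IsTDS T D := by
    rw [IsTDS, Set.eq_univ_iff_forall]
    intro v
    have hv3 := height_le_three hh v
    have hcases : heightV T v = 0 ∨ heightV T v = 1 ∨ heightV T v = 2 ∨ heightV T v = 3 := by
      omega
    have hbody : (heightV T v = 1 ∨ heightV T v = 3) → v ∈ nbhd T D := by
      intro h13
      rcases Classical.em (v = c) with hvc | hvc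
      · subst hvc
        rcases hE with ⟨hE1, _⟩ | ⟨hE1, hmem⟩
        · exact ⟨ℓf v, Or.inr (by rw [hE1]; rfl), hadjc.symm⟩
        · rcases hmem with hma | hma'
          · exact ⟨a, Or.inl (Or.inl (Or.inr hma)), hca.symm⟩
          · exact ⟨a', Or.inl (Or.inr hma'), hca'.symm⟩
      · rcases Classical.em (Br T c a v) with hbr | hnbr
        · obtain ⟨w, hw, hadj⟩ := hWa.2.1 v hbr h13
          exact ⟨w, Or.inl (Or.inl (Or.inr hw)), hadj⟩
        · rcases Classical.em (Br T c a' v) with hbr' | hnbr'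
          · obtain ⟨w, hw, hadj⟩ := hWa'.2.1 v hbr' h13
            exact ⟨w, Or.inl (Or.inr hw), hadj⟩
          · obtain ⟨w, hw, hadj⟩ := hG.2.1 v hvc hnbr hnbr' h13
            exact ⟨w, Or.inl (Or.inl (Or.inl (Or.inr hw))), hadj⟩
    rcases hcases with h0 | h1 | h2 | h3
    · have hl := isLeaf_of_height0 hc hleaf h0
      obtain ⟨s, hNs⟩ := Set.ncard_eq_one.mp hl
      have hs : T.Adj v s := by
        have : s ∈ T.neighborSet v := by rw [hNs]; rfl
        exact this
      exact ⟨s, Or.inl (Or.inl (Or.inl (Or.inl (g_adj0 ht hbal hh hs.symm h0)))), hs.symm⟩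
    · exact hbody (Or.inl h1)
    · obtain ⟨s, hadj, hs1⟩ := exists_desc hc hleaf hbal (show heightV T v = 1 + 1 from h2)
      exact ⟨s, Or.inl (Or.inl (Or.inl (Or.inl hs1))), hadj.symm⟩
    · exact hbody (Or.inr h3)
  apply min_of_priv' hTDS
  rintro d ((((hd | hd) | hd) | hd) | hd)
  · refine ⟨ℓf d, fun e heD headj => ?_⟩
    exact leaf_adj_eq (hℓf d hd).1 (hℓf d hd).2.symm headj.symm
  · obtain ⟨t, htc, hnba, hnba', h13, hpriv⟩ := hG.2.2 d hd
    refine ⟨t, ?_⟩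
    rintro e ((((he | he) | he) | he) | he) headj
    · exfalso
      have := g_adj13 ht hbal hh headj h13
      have h1 := hSh e he
      omega
    · exact hpriv e he headj
    · exfalso
      have hec : e ≠ c := by
        rcases hWah e he with h | h <;> exact hne_of_height h hc1 (by omega)
      exact hnba (br_extend (hWa.1 e he).1 headj htc hec)
    · exfalso
      have hec : e ≠ c := by
        rcases hWa'h e he with h | h <;> exact hne_of_height h hc1 (by omega)
      exact hnba' (br_extend (hWa'.1 e he).1 headj htc hec)
    · exfalso
      rw [hEh e he] at headj
      exact htc (leaf_adj_eq hlc hadjc.symm headj)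
  · obtain ⟨t, hbrt, h13, hpriv⟩ := hWa.2.2 d hd
    have htc : t ≠ c := br_ne_center hca.ne' hbrt
    refine ⟨t, ?_⟩
    rintro e ((((he | he) | he) | he) | he) headj
    · exfalso
      have := g_adj13 ht hbal hh headj h13
      have h1 := hSh e he
      omega
    · exfalso
      have hec : e ≠ c := by
        rcases hGh e he with h | h <;> exact hne_of_height h hc1 (by omega)
      exact (hG.1 e he).2.2.1 (br_extend hbrt headj.symm hec htc)
    · exact hpriv e he headj
    · exfalso
      have hec : e ≠ c := by
        rcases hWa'h e he with h | h <;> exact hne_of_height h hc1 (by omega)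
      exact br_disjoint ht hca hca' hne hbrt (br_extend (hWa'.1 e he).1 headj htc hec)
    · exfalso
      rw [hEh e he] at headj
      exact htc (leaf_adj_eq hlc hadjc.symm headj)
  · obtain ⟨t, hbrt, h13, hpriv⟩ := hWa'.2.2 d hd
    have htc : t ≠ c := br_ne_center hca'.ne' hbrt
    refine ⟨t, ?_⟩
    rintro e ((((he | he) | he) | he) | he) headj
    · exfalso
      have := g_adj13 ht hbal hh headj h13
      have h1 := hSh e he
      omega
    · exfalso
      have hec : e ≠ c := by
        rcases hGh e he with h | h <;> exact hne_of_height h hc1 (by omega)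
      exact (hG.1 e he).2.2.2 (br_extend hbrt headj.symm hec htc)
    · exfalso
      have hec : e ≠ c := by
        rcases hWah e he with h | h <;> exact hne_of_height h hc1 (by omega)
      exact br_disjoint ht hca hca' hne (br_extend (hWa.1 e he).1 headj htc hec) hbrt
    · exact hpriv e he headj
    · exfalso
      rw [hEh e he] at headj
      exact htc (leaf_adj_eq hlc hadjc.symm headj)
  · have hdc := hEh d hd
    rcases hE with ⟨hE1, hana, hana'⟩ | ⟨hE1, _⟩
    · subst hdc
      refine ⟨c, ?_⟩
      rintro e ((((he | he) | he) | he) | he) headj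
      · exact absurd (by rw [hSh e he, hc1]) (hbal e c headj)
      · exact absurd headj (hG.1 e he).2.1
      · exfalso
        have : e = a := br_center_adj_eq ht hca (hWa.1 e he).1 headj.symm
        exact hana (this ▸ he)
      · exfalso
        have : e = a' := br_center_adj_eq ht hca' (hWa'.1 e he).1 headj.symm
        exact hana' (this ▸ he)
      · exact hEh e he
    · rw [hE1] at hd
      exact absurd hd (Set.notMem_empty d)

end Parts

lemma ncard_union5 {A B C D E : Set V} (h1 : Disjoint A B) (h2 : Disjoint (A ∪ B) C)
    (h3 : Disjoint (A ∪ B ∪ C) D) (h4 : Disjoint (A ∪ B ∪ C ∪ D) E) :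
    (A ∪ B ∪ C ∪ D ∪ E).ncard = A.ncard + B.ncard + C.ncard + D.ncard + E.ncard := by
  rw [Set.ncard_union_eq h4 (Set.toFinite _) (Set.toFinite _),
    Set.ncard_union_eq h3 (Set.toFinite _) (Set.toFinite _),
    Set.ncard_union_eq h2 (Set.toFinite _) (Set.toFinite _),
    Set.ncard_union_eq h1 (Set.toFinite _) (Set.toFinite _)]

lemma key (ht : T.IsTree) (hbal : IsBalanced T) (hh : heightG T = 3) (hwtd : WTD T)
    {c a a' : V} (hc1 : heightV T c = 1) (ha2 : heightV T a = 2) (ha'2 : heightV T a' = 2)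
    (hne : a ≠ a') (hca : T.Adj c a) (hca' : T.Adj c a') : False := by
  have hc := ht.isConnected
  have hleaf := exists_leaf hh
  have hlex : ∀ s : V, ∃ l, heightV T s = 1 → IsLeaf T l ∧ T.Adj s l := by
    intro s
    rcases Classical.em (heightV T s = 1) with hs | hs
    · obtain ⟨w, hadj, hw0⟩ := exists_desc hc hleaf hbal (show heightV T s = 0 + 1 from hs)
      exact ⟨w, fun _ => ⟨isLeaf_of_height0 hc hleaf hw0, hadj⟩⟩
    · exact ⟨s, fun h => absurd h hs⟩
  choose ℓf hℓf using hlex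
  have hlc : IsLeaf T (ℓf c) := (hℓf c hc1).1
  have hadjc : T.Adj c (ℓf c) := (hℓf c hc1).2
  have hlch : heightV T (ℓf c) = 0 := heightV_leaf hlc
  obtain ⟨Ma, hMa, hMax⟩ := partM ht hbal hh ℓf hℓf hc1 hca ha2
  obtain ⟨Ma', hMa', hMa'x⟩ := partM ht hbal hh ℓf hℓf hc1 hca' ha'2
  obtain ⟨Pa, hPa, hPax⟩ := partP ht hbal hh ℓf hℓf hc1 hca ha2
  obtain ⟨Pa', hPa', hPa'x⟩ := partP ht hbal hh ℓf hℓf hc1 hca' ha'2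
  obtain ⟨G, hG⟩ := partG ht hbal hh ℓf hℓf hc1 hca ha2 hca' ha'2
  set S := {v | heightV T v = 1} with hS
  have hDII := assemble ht hbal hh ℓf hℓf hc1 hca ha2 hca' ha'2 hne hG hMa hMa'
    (Or.inl ⟨rfl, hMax, hMa'x⟩)
  have hDIa := assemble ht hbal hh ℓf hℓf hc1 hca ha2 hca' ha'2 hne hG hPa hMa'
    (Or.inr ⟨rfl, Or.inl hPax⟩)
  have hDIa' := assemble ht hbal hh ℓf hℓf hc1 hca ha2 hca' ha'2 hne hG hMa hPa'
    (Or.inr ⟨rfl, Or.inr hPa'x⟩)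
  have hD4 := assemble ht hbal hh ℓf hℓf hc1 hca ha2 hca' ha'2 hne hG hPa hPa'
    (Or.inr ⟨rfl, Or.inl hPax⟩)
  -- sizes
  have hsize : ∀ (Wa Wa' E : Set V), PartOK T c a Wa → PartOK T c a' Wa' →
      (E = {ℓf c} ∨ E = ∅) →
      (S ∪ G ∪ Wa ∪ Wa' ∪ E).ncard
        = S.ncard + G.ncard + Wa.ncard + Wa'.ncard + E.ncard := by
    intro Wa Wa' E hWa hWa' hEc
    have hSG : Disjoint S G := Set.disjoint_left.mpr fun x hx hx' => by
      have h02 := (hG.1 x hx').1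
      have hx1 : heightV T x = 1 := hx
      omega
    have hSWa : Disjoint S Wa := Set.disjoint_left.mpr fun x hx hx' => by
      have h02 := (hWa.1 x hx').2
      have hx1 : heightV T x = 1 := hx
      omega
    have hSWa' : Disjoint S Wa' := Set.disjoint_left.mpr fun x hx hx' => by
      have h02 := (hWa'.1 x hx').2
      have hx1 : heightV T x = 1 := hx
      omega
    have hGWa : Disjoint G Wa := Set.disjoint_left.mpr fun x hx hx' =>
      (hG.1 x hx).2.2.1 (hWa.1 x hx').1
    have hGWa' : Disjoint G Wa' := Set.disjoint_left.mpr fun x hx hx' =>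
      (hG.1 x hx).2.2.2 (hWa'.1 x hx').1
    have hWaWa' : Disjoint Wa Wa' := Set.disjoint_left.mpr fun x hx hx' =>
      br_disjoint ht hca hca' hne (hWa.1 x hx).1 (hWa'.1 x hx').1
    have hlcS : ℓf c ∉ S := fun hmem => by
      have : heightV T (ℓf c) = 1 := hmem
      omega
    have hlcG : ℓf c ∉ G := fun hmem => (hG.1 _ hmem).2.1 hadjc.symm
    have hlcWa : ℓf c ∉ Wa := fun hmem => by
      have : ℓf c = a := br_center_adj_eq ht hca (hWa.1 _ hmem).1 hadjc
      rw [this] at hlch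
      omega
    have hlcWa' : ℓf c ∉ Wa' := fun hmem => by
      have : ℓf c = a' := br_center_adj_eq ht hca' (hWa'.1 _ hmem).1 hadjc
      rw [this] at hlch
      omega
    have hE4 : Disjoint (S ∪ G ∪ Wa ∪ Wa') E := by
      rcases hEc with rfl | rfl
      · rw [Set.disjoint_singleton_right]
        rintro (((h | h) | h) | h)
        · exact hlcS h
        · exact hlcG h
        · exact hlcWa h
        · exact hlcWa' h
      · exact Set.disjoint_empty _
    exact ncard_union5 hSG (Set.disjoint_union_left.mpr ⟨hSWa, hGWa⟩)
      (Set.disjoint_union_left.mpr ⟨Set.disjoint_union_left.mpr ⟨hSWa', hGWa'⟩, hWaWa'⟩) hE4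
  have e1 := hwtd _ _ hDII hDIa
  have e2 := hwtd _ _ hDII hDIa'
  have e3 := hwtd _ _ hDII hD4
  rw [hsize Ma Ma' _ hMa hMa' (Or.inl rfl), hsize Pa Ma' _ hPa hMa' (Or.inr rfl)] at e1
  rw [hsize Ma Ma' _ hMa hMa' (Or.inl rfl), hsize Ma Pa' _ hMa hPa' (Or.inr rfl)] at e2
  rw [hsize Ma Ma' _ hMa hMa' (Or.inl rfl), hsize Pa Pa' _ hPa hPa' (Or.inr rfl)] at e3
  rw [Set.ncard_singleton, Set.ncard_empty] at e1 e2 e3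
  omega

lemma support_ge (ht : T.IsTree) (hbal : IsBalanced T) (hh : heightG T = 3) (hwtd : WTD T) :
    ∀ {u v : V} (p : T.Walk u v), p.IsPath →
    2 ≤ heightV T u → 2 ≤ heightV T v → ∀ w ∈ p.support, 2 ≤ heightV T w := by
  have hc := ht.isConnected
  have hleaf := exists_leaf hh
  intro u v p
  induction p with
  | nil =>
    intro _ h2u _ w hw
    simp only [Walk.support_nil, List.mem_singleton] at hw
    exact hw ▸ h2u
  | @cons u w₁ v hadj q ih =>
    intro hp h2u h2v w hw
    simp only [Walk.support_cons, List.mem_cons] at hw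
    rcases hw with rfl | hw
    · exact h2u
    · have hW1 : 2 ≤ heightV T w₁ := by
        by_contra hlt
        push_neg at hlt
        have hd := heightV_adj hc hleaf hbal hadj
        have hu3 := height_le_three hh u
        have hu2 : heightV T u = 2 := by omega
        have hw11 : heightV T w₁ = 1 := by omega
        cases q with
        | nil => omega
        | @cons _ w₂ _ hadj2 r =>
          have h02 := g_adj1 ht hbal hh hadj2.symm hw11
          rcases h02 with h0 | h2'
          · have hl2 : IsLeaf T w₂ := isLeaf_of_height0 hc hleaf h0
            cases r with
            | nil => omega
            | @cons _ w₃ _ hadj3 r' =>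
              have hw3 : w₃ = w₁ := leaf_adj_eq hl2 hadj2.symm hadj3
              have hp' : (Walk.cons hadj2 (Walk.cons hadj3 r')).IsPath := hp.of_cons
              rw [Walk.cons_isPath_iff] at hp'
              apply hp'.2
              rw [Walk.support_cons]
              exact List.mem_cons_of_mem _ (hw3 ▸ r'.start_mem_support)
          · have hnequ : u ≠ w₂ := by
              rw [Walk.cons_isPath_iff] at hp
              intro he
              apply hp.2
              rw [he, Walk.support_cons]
              exact List.mem_cons_of_mem _ r.start_mem_support
            exact key ht hbal hh hwtd hw11 hu2 h2' hnequ hadj.symm hadj2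
      exact ih hp.of_cons hW1 h2v w hw

lemma walk_in_induce {K : Set V} : ∀ {u v : V} (p : T.Walk u v)
    (hs : ∀ w ∈ p.support, w ∈ K) (hu : u ∈ K) (hv : v ∈ K),
    (T.induce K).Reachable ⟨u, hu⟩ ⟨v, hv⟩ := by
  intro u v p
  induction p with
  | nil => intro _ _ _; exact Reachable.refl _
  | @cons u w₁ v hadj q ih =>
    intro hs hu hv
    have h1 : w₁ ∈ K := by
      apply hs w₁
      rw [Walk.support_cons]
      exact List.mem_cons_of_mem _ q.start_mem_support
    refine Reachable.trans (SimpleGraph.Adj.reachable ?_) (ih ?_ h1 hv)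
    · exact hadj
    · intro w hw
      apply hs w
      rw [Walk.support_cons]
      exact List.mem_cons_of_mem _ hw

end Stmt18Aux

theorem stmt18 {V : Type*} [Fintype V] (T : SimpleGraph V) (htree : T.IsTree)
    (hbal : IsBalanced T) (hh : heightG T = 3) (hwtd : WTD T) :
    (T.induce {v : V | heightV T v = 2 ∨ heightV T v = 3}).Connected := by
  classical
  have hc := htree.isConnected
  rw [SimpleGraph.connected_iff]
  refine ⟨?_, ?_⟩
  · rintro ⟨u, hu⟩ ⟨v, hv⟩
    obtain ⟨p0⟩ := hc.preconnected u v
    have hp : p0.bypass.IsPath := Walk.bypass_isPath p0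
    have h2u : 2 ≤ heightV T u := by rcases hu with h | h <;> omega
    have h2v : 2 ≤ heightV T v := by rcases hv with h | h <;> omega
    have hsup := Stmt18Aux.support_ge htree hbal hh hwtd p0.bypass hp h2u h2v
    exact Stmt18Aux.walk_in_induce p0.bypass
      (fun w hw => by
        have h1 := hsup w hw
        have h2 := Stmt18Aux.height_le_three hh w
        have : heightV T w = 2 ∨ heightV T w = 3 := by omega
        exact this) hu hv
  · obtain ⟨v, hv⟩ := Stmt18Aux.exists_height3 hh
    exact ⟨⟨v, Or.inr hv⟩⟩
end

section
/- Let T be a well-totally dominated balanced tree of height 3. Then there exists a vertex u of height 2 such that u has exactly one neighbor of height 3. -/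
open SimpleGraph Set

section Aux
set_option linter.unusedSectionVars false
variable {V : Type*} [DecidableEq V] {T : SimpleGraph V}

lemma my_exists_geodesic (hc : T.Connected) (r b : V) :
    ∃ p : T.Walk r b, p.IsPath ∧ p.length = T.dist r b := by
  obtain ⟨w, hw⟩ := (hc r b).exists_walk_length_eq_dist
  exact ⟨w.bypass, w.bypass_isPath,
    le_antisymm (hw ▸ w.length_bypass_le) (T.dist_le _)⟩

lemma my_isPath_concat {r b c : V} {p : T.Walk r b} (hp : p.IsPath) (h : T.Adj b c)
    (hc : c ∉ p.support) : (p.concat h).IsPath := by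
  rw [Walk.isPath_def, Walk.support_concat]
  simp only [List.concat_eq_append, List.nodup_append, List.nodup_cons, List.nodup_nil,
    List.not_mem_nil, not_false_iff, and_true, List.disjoint_singleton]
  exact ⟨hp.support_nodup, by
    refine ⟨trivial, ?_⟩
    intro a ha b' hb hab
    rw [List.mem_singleton] at hb
    subst hb; subst hab; exact hc ha⟩

/-- In a tree, a vertex has at most one neighbor strictly closer to a root. -/
lemma my_unique_down (htree : T.IsTree) {r a b c : V} (hab : T.Adj a b) (hcb : T.Adj c b)
    (ha : T.dist r a < T.dist r b) (hc : T.dist r c < T.dist r b) : a = c := by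
  obtain ⟨p, hp, hpl⟩ := my_exists_geodesic htree.isConnected r a
  obtain ⟨q, hq, hql⟩ := my_exists_geodesic htree.isConnected r c
  have hbp : b ∉ p.support := fun hb =>
    absurd ((T.dist_le _).trans (p.length_takeUntil_le hb)) (by omega)
  have hbq : b ∉ q.support := fun hb =>
    absurd ((T.dist_le _).trans (q.length_takeUntil_le hb)) (by omega)
  have huniq := isAcyclic_iff_path_unique.mp htree.IsAcyclic
    (⟨p.concat hab, my_isPath_concat hp hab hbp⟩ : T.Path r b)
    (⟨q.concat hcb, my_isPath_concat hq hcb hbq⟩ : T.Path r b)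
  have : p.concat hab = q.concat hcb := congrArg Subtype.val huniq
  obtain ⟨hv, -⟩ := Walk.concat_inj this
  exact hv

/-- In a tree, adjacent vertices have different distances to any root. -/
lemma my_adj_dist_ne (htree : T.IsTree) {r b c : V} (hbc : T.Adj b c) :
    T.dist r b ≠ T.dist r c := by
  intro heq
  obtain ⟨p, hp, hpl⟩ := my_exists_geodesic htree.isConnected r b
  obtain ⟨q, hq, hql⟩ := my_exists_geodesic htree.isConnected r c
  have hcb : c ≠ b := hbc.ne'
  have hcp : c ∉ p.support := by
    intro hcmem
    have hsplit := congrArg Walk.length (p.take_spec hcmem)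
    rw [Walk.length_append] at hsplit
    have hdroppos : 0 < (p.dropUntil c hcmem).length :=
      Nat.pos_of_ne_zero fun h0 => hcb (Walk.eq_of_length_eq_zero h0)
    have : T.dist r c ≤ (p.takeUntil c hcmem).length := T.dist_le _
    omega
  have huniq := isAcyclic_iff_path_unique.mp htree.IsAcyclic
    (⟨p.concat hbc, my_isPath_concat hp hbc hcp⟩ : T.Path r c)
    (⟨q, hq⟩ : T.Path r c)
  have hlen : (p.concat hbc).length = q.length := congrArg Walk.length
    (congrArg Subtype.val huniq)
  rw [Walk.length_concat] at hlen
  omega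

/-- Key step: a non-backtracking walk in a tree moves away from the root. -/
lemma my_dist_step (htree : T.IsTree) {r a b c : V} {n : ℕ} (hab : T.Adj a b)
    (hbc : T.Adj b c) (hca : c ≠ a) (hda : T.dist r a = n) (hdb : T.dist r b = n + 1) :
    T.dist r c = n + 2 := by
  have h1 : T.dist r c ≤ n + 2 := by
    have := htree.isConnected.dist_triangle (u := r) (v := b) (w := c)
    rw [dist_eq_one_iff_adj.mpr hbc] at this; omega
  have h2 : T.dist r b ≤ T.dist r c + 1 := by
    have := htree.isConnected.dist_triangle (u := r) (v := c) (w := b)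
    rw [dist_eq_one_iff_adj.mpr hbc.symm] at this; omega
  have h3 : T.dist r c ≠ n + 1 := hdb ▸ (my_adj_dist_ne htree hbc).symm
  have h4 : ¬ T.dist r c < T.dist r b := fun hlt =>
    hca (my_unique_down (r := r) htree hbc.symm hab (by omega) (by omega))
  omega

end Aux

theorem stmt19 {V : Type*} [Fintype V] (T : SimpleGraph V) (htree : T.IsTree)
    (hbal : IsBalanced T) (hh : heightG T = 3) (hwtd : WTD T) :
    ∃ u : V, heightV T u = 2 ∧
      ({w ∈ T.neighborSet u | heightV T w = 3}).ncard = 1 := by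
  classical
  by_contra H
  push_neg at H
  -- basic facts about heights
  have hSfin : {d | ∃ v, heightV T v = d}.Finite := by
    have : {d | ∃ v, heightV T v = d} = Set.range (heightV T) := by
      ext d; simp [Set.range, eq_comm]
    rw [this]; exact Set.finite_range _
  have hbd : ∀ v, heightV T v ≤ 3 := fun v =>
    hh ▸ le_csSup hSfin.bddAbove ⟨v, rfl⟩
  have hVne : Nonempty V := htree.isConnected.nonempty
  obtain ⟨v0, hv0⟩ : ∃ v, heightV T v = 3 := by
    have hne : {d | ∃ v, heightV T v = d}.Nonempty := ⟨heightV T (Classical.arbitrary V), _, rfl⟩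
    have h3 : sSup {d | ∃ v, heightV T v = d} = 3 := hh
    have hmem := Nat.sSup_mem hne hSfin.bddAbove
    rwa [h3] at hmem
  -- a leaf exists
  have hlv0 : {d | ∃ ℓ, IsLeaf T ℓ ∧ T.dist v0 ℓ = d}.Nonempty := by
    by_contra hemp
    rw [Set.not_nonempty_iff_eq_empty] at hemp
    rw [heightV, hemp, Nat.sInf_empty] at hv0
    exact absurd hv0 (by omega)
  obtain ⟨ℓ0, hℓ0, hdℓ0⟩ : ∃ ℓ, IsLeaf T ℓ ∧ T.dist v0 ℓ = heightV T v0 := Nat.sInf_mem hlv0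
  have hne : ∀ v, {d | ∃ ℓ, IsLeaf T ℓ ∧ T.dist v ℓ = d}.Nonempty :=
    fun v => ⟨_, ℓ0, hℓ0, rfl⟩
  have hle_dist : ∀ v ℓ, IsLeaf T ℓ → heightV T v ≤ T.dist v ℓ :=
    fun v ℓ hℓ => Nat.sInf_le ⟨ℓ, hℓ, rfl⟩
  -- leaves have height 0
  have hleaf0 : ∀ v, IsLeaf T v → heightV T v = 0 := fun v hv =>
    Nat.le_zero.mp (by simpa [SimpleGraph.dist_self] using hle_dist v v hv)
  -- Lipschitz property
  have hlip : ∀ u w, T.Adj u w → heightV T u ≤ heightV T w + 1 := by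
    intro u w huw
    obtain ⟨ℓ, hℓ, hd⟩ : ∃ ℓ, IsLeaf T ℓ ∧ T.dist w ℓ = heightV T w := Nat.sInf_mem (hne w)
    have htri := htree.isConnected.dist_triangle (u := u) (v := w) (w := ℓ)
    rw [SimpleGraph.dist_eq_one_iff_adj.mpr huw] at htri
    calc heightV T u ≤ T.dist u ℓ := hle_dist u ℓ hℓ
      _ ≤ 1 + T.dist w ℓ := htri
      _ = heightV T w + 1 := by omega
  -- neighbors of height-3 vertices have height 2
  have h2 : ∀ v w, heightV T v = 3 → T.Adj v w → heightV T w = 2 := by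
    intro v w hv hvw
    have h1 := hlip v w hvw
    have h3 := hbd w
    have h4 := hbal v w hvw
    omega
  -- every height-3 vertex has at least two neighbors
  have hdeg2 : ∀ v, heightV T v = 3 → 1 < (T.neighborSet v).ncard := by
    intro v hv
    have hvne : v ≠ ℓ0 := fun h => by
      rw [h, hleaf0 ℓ0 hℓ0] at hv; exact absurd hv (by omega)
    have hnbne : (T.neighborSet v).Nonempty := by
      obtain ⟨w⟩ := htree.isConnected.preconnected v ℓ0
      cases w with
      | nil => exact absurd rfl hvne
      | cons h p => exact ⟨_, h⟩
    have h1 : 0 < (T.neighborSet v).ncard := (Set.ncard_pos (Set.toFinite _)).mpr hnbne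
    have hne1 : (T.neighborSet v).ncard ≠ 1 := fun h => by
      have : heightV T v = 0 := hleaf0 v h
      omega
    omega
  -- key extension step
  have key : ∀ a b : V, T.Adj a b →
      (heightV T a = 3 ∧ heightV T b = 2) ∨ (heightV T a = 2 ∧ heightV T b = 3) →
      ∃ c, (T.Adj b c ∧
        ((heightV T b = 3 ∧ heightV T c = 2) ∨ (heightV T b = 2 ∧ heightV T c = 3))) ∧ c ≠ a := by
    intro a b hab hcase
    rcases hcase with ⟨ha3, hb2⟩ | ⟨ha2, hb3⟩
    · -- b has height 2; its set of height-3 neighbors has ≥ 2 elements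
      set A := {w ∈ T.neighborSet b | heightV T w = 3} with hA
      have haA : a ∈ A := ⟨hab.symm, ha3⟩
      have hApos : 0 < A.ncard := (Set.ncard_pos (Set.toFinite _)).mpr ⟨a, haA⟩
      have hA1 : A.ncard ≠ 1 := H b hb2
      have hAlt : 1 < A.ncard := by omega
      obtain ⟨c, hcA, hca⟩ := Set.exists_ne_of_one_lt_ncard hAlt a
      exact ⟨c, ⟨hcA.1, Or.inr ⟨hb2, hcA.2⟩⟩, hca⟩
    · -- b has height 3; it has ≥ 2 neighbors, all of height 2
      obtain ⟨c, hcN, hca⟩ := Set.exists_ne_of_one_lt_ncard (hdeg2 b hb3) a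
      exact ⟨c, ⟨hcN, Or.inl ⟨hb3, h2 b c hb3 hcN⟩⟩, hca⟩
  -- choice function
  have key' : ∀ p : V × V, ∃ c : V,
      (T.Adj p.1 p.2 ∧ ((heightV T p.1 = 3 ∧ heightV T p.2 = 2) ∨
        (heightV T p.1 = 2 ∧ heightV T p.2 = 3))) →
      (T.Adj p.2 c ∧ ((heightV T p.2 = 3 ∧ heightV T c = 2) ∨
        (heightV T p.2 = 2 ∧ heightV T c = 3))) ∧ c ≠ p.1 := by
    intro p
    by_cases h : T.Adj p.1 p.2 ∧ ((heightV T p.1 = 3 ∧ heightV T p.2 = 2) ∨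
        (heightV T p.1 = 2 ∧ heightV T p.2 = 3))
    · obtain ⟨c, hc⟩ := key p.1 p.2 h.1 h.2
      exact ⟨c, fun _ => hc⟩
    · exact ⟨p.1, fun hq => absurd hq h⟩
  choose f hf using key'
  -- starting pair
  obtain ⟨u0, hu0adj⟩ : ∃ u, T.Adj v0 u := by
    have hvne : v0 ≠ ℓ0 := fun h => by
      rw [h, hleaf0 ℓ0 hℓ0] at hv0; exact absurd hv0 (by omega)
    obtain ⟨w⟩ := htree.isConnected.preconnected v0 ℓ0
    cases w with
    | nil => exact absurd rfl hvne
    | cons h p => exact ⟨_, h⟩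
  have hu02 : heightV T u0 = 2 := h2 v0 u0 hv0 hu0adj
  -- the infinite walk
  set g : V × V → V × V := fun p => (p.2, f p) with hg
  set s : ℕ → V × V := fun n => g^[n] (v0, u0) with hs
  have inv : ∀ n, (T.Adj (s n).1 (s n).2 ∧
      ((heightV T (s n).1 = 3 ∧ heightV T (s n).2 = 2) ∨
        (heightV T (s n).1 = 2 ∧ heightV T (s n).2 = 3))) ∧
      T.dist v0 (s n).1 = n ∧ T.dist v0 (s n).2 = n + 1 := by
    intro n
    induction n with
    | zero =>
      refine ⟨⟨hu0adj, Or.inl ⟨hv0, hu02⟩⟩, ?_, ?_⟩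
      · simp [hs, SimpleGraph.dist_self]
      · simpa [hs] using SimpleGraph.dist_eq_one_iff_adj.mpr hu0adj
    | succ n ih =>
      obtain ⟨hQ, hda, hdb⟩ := ih
      have hstep : s (n + 1) = ((s n).2, f (s n)) := by
        show g^[n + 1] (v0, u0) = ((g^[n] (v0, u0)).2, f (g^[n] (v0, u0)))
        rw [Function.iterate_succ_apply']
      have hfc := hf (s n) hQ
      refine ⟨?_, ?_, ?_⟩
      · rw [hstep]; exact hfc.1
      · rw [hstep]; exact hdb
      · rw [hstep]
        exact my_dist_step htree hQ.1 hfc.1.1 hfc.2 hda hdb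
  -- contradiction with finiteness
  have hcard := (inv (Fintype.card V)).2.1
  obtain ⟨p, hp, hpl⟩ := my_exists_geodesic htree.isConnected v0 (s (Fintype.card V)).1
  have := hp.length_lt
  omega
end
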